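/- arXiv:1208.5194 — 9 statements merged into one kernel-verified Lean document; each statement's English description precedes it below -/
import Mathlib

section
/- Let p be a prime, e a positive integer, and a,b,c,d elements of Z/p^e. The number of pairs (x,y) in (Z/p^e)^2 satisfying a*x + b*y ≡ 0 and c*x + d*y ≡ 0 (mod p^e) equals gcd(a*d - b*c, p^e * gcd(a,b,c,d,p^e)). -/
open scoped Classical

def Primitive {m n : ℕ} (u : Fin n → ZMod m) : Prop :=
  Nat.gcd (Finset.univ.gcd fun i => (u i).val) m = 1

def assoc {m n : ℕ} (u v : Fin n → ZMod m) : Prop :=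
  ∃ lam : (ZMod m)ˣ, v = fun i => (lam : ZMod m) * u i

def projSetoid (m n : ℕ) : Setoid {u : Fin n → ZMod m // Primitive u} where
  r u v := assoc u.1 v.1
  iseqv := by
    refine ⟨fun u => ⟨1, by simp⟩, ?_, ?_⟩
    · rintro u v ⟨l, h⟩
      refine ⟨l⁻¹, ?_⟩
      funext i
      simp [h, ← mul_assoc]
    · rintro u v w ⟨l, hl⟩ ⟨k, hk⟩
      refine ⟨k * l, ?_⟩
      funext i
      simp [hk, hl, mul_assoc]

abbrev ProjPt (m n : ℕ) := Quotient (projSetoid m n)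

noncomputable def theta (n m : ℕ) : ℕ := Nat.card (ProjPt m n)

def orthoPt (m n : ℕ) (U W : ProjPt m n) : Prop :=
  ∀ (u w : {x : Fin n → ZMod m // Primitive x}),
    Quotient.mk (projSetoid m n) u = U → Quotient.mk (projSetoid m n) w = W →
      ∑ i, u.1 i * w.1 i = 0

noncomputable def Bmat (m n : ℕ) : Matrix (ProjPt m n) (ProjPt m n) ℚ :=
  fun U V => (Nat.card {W : ProjPt m n // orthoPt m n U W ∧ orthoPt m n V W} : ℚ)

noncomputable def nuVal (p e : ℕ) (x : ZMod (p^e)) : ℕ := if x = 0 then e else padicValNat p x.val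

noncomputable def nuXi (p e : ℕ) {n : ℕ} (u v : Fin n → ZMod (p^e)) : ℕ :=
  sInf {k | ∃ i j : Fin n, k = nuVal p e (u i * v j - u j * v i)}

noncomputable def red (p e : ℕ) {n : ℕ} (u : Fin n → ZMod (p^e)) : Fin n → ZMod (p^(e-1)) :=
  fun i => ZMod.castHom (pow_dvd_pow p (Nat.sub_le e 1)) (ZMod (p^(e-1))) (u i)

noncomputable def eigMult {ι : Type*} [Fintype ι] (B : Matrix ι ι ℚ) (lam : ℚ) : ℕ :=
  Module.finrank ℚ (LinearMap.ker (B.mulVecLin - lam • (LinearMap.id : (ι → ℚ) →ₗ[ℚ] (ι → ℚ))))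
/-!
Over `ZMod (p ^ e)` divisibility is total, so after swapping rows and columns `a` divides the
other three entries: `b = a * q`, `c = a * r`. The shear `(x, y) ↦ (x + q * y, y)` turns the system
into `a * x = 0 ∧ d' * y = 0` with `d' = d - r * a * q`, which has `gcd(a, m) * gcd(d', m)`
solutions (`m = p ^ e`). On the integer side `gcd(a, m)` is the content `gcd(a, b, c, d, m)`, the
determinant is `a * d'` modulo `m * gcd(a, m)`, and `gcd(a, m) ∣ d'` gives
`gcd(a * d', m * gcd(a, m)) = gcd(a, m) * gcd(d', m)`.
-/

def homogSolutions {R : Type*} [CommRing R] (a b c d : R) : Set (R × R) :=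
  {xy | a * xy.1 + b * xy.2 = 0 ∧ c * xy.1 + d * xy.2 = 0}

def detContentGcd (m : ℕ) (a b c d : ZMod m) : ℕ :=
  Int.gcd ((a.val : ℤ) * (d.val : ℤ) - (b.val : ℤ) * (c.val : ℤ))
    ((m : ℤ) * (Nat.gcd a.val (Nat.gcd b.val (Nat.gcd c.val (Nat.gcd d.val m))) : ℤ))

section homogSolutions

variable {R : Type*} [CommRing R]

lemma card_homogSolutions_swap_rows (a b c d : R) :
    Nat.card (homogSolutions c d a b) = Nat.card (homogSolutions a b c d) :=
  Nat.card_congr (Equiv.subtypeEquivRight fun _ => and_comm)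

lemma card_homogSolutions_swap_cols (a b c d : R) :
    Nat.card (homogSolutions b a d c) = Nat.card (homogSolutions a b c d) :=
  Nat.card_congr <| Equiv.subtypeEquiv (Equiv.prodComm R R) fun _ => by
    simp only [homogSolutions, Set.mem_ofPred_eq, Equiv.prodComm_apply, Prod.fst_swap,
      Prod.snd_swap, add_comm]

lemma card_homogSolutions_mul_mul (a q r d : R) :
    Nat.card (homogSolutions a (a * q) (a * r) d) =
      Nat.card {x : R // a * x = 0} * Nat.card {y : R // (d - r * (a * q)) * y = 0} := by
  let shear : R × R ≃ R × R :=
    ⟨fun z => (z.1 + q * z.2, z.2), fun z => (z.1 - q * z.2, z.2), fun z => by simp,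
      fun z => by simp⟩
  rw [← Nat.card_prod]
  refine Nat.card_congr <|
    (Equiv.subtypeEquiv shear fun z => ?_).trans Equiv.subtypeProdEquivProd
  simp only [homogSolutions, Set.mem_ofPred_eq, shear, Equiv.coe_fn_mk]
  constructor
  · rintro ⟨h₁, h₂⟩
    exact ⟨by linear_combination h₁, by linear_combination h₂ - r * h₁⟩
  · rintro ⟨h₁, h₂⟩
    exact ⟨by linear_combination h₁, by linear_combination h₂ + r * h₁⟩

end homogSolutions

lemma exists_dvd_all_of_dvd_total {α : Type*} [Monoid α] (h : ∀ x y : α, x ∣ y ∨ y ∣ x)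
    (a b c d : α) :
    (a ∣ b ∧ a ∣ c ∧ a ∣ d) ∨ (b ∣ a ∧ b ∣ c ∧ b ∣ d) ∨ (c ∣ a ∧ c ∣ b ∧ c ∣ d) ∨
      (d ∣ a ∧ d ∣ b ∧ d ∣ c) := by
  have := h a b; have := h a c; have := h a d; have := h b c; have := h b d; have := h c d
  grind [dvd_trans]

lemma Nat.gcd_mul_mul_gcd_of_gcd_dvd {A D m : ℕ} (h : Nat.gcd A m ∣ D) :
    Nat.gcd (A * D) (m * Nat.gcd A m) = Nat.gcd A m * Nat.gcd D m := by
  set g := Nat.gcd A m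
  rw [← Nat.gcd_mul_left g D m, mul_comm m g]
  refine Nat.dvd_antisymm (Nat.dvd_gcd ?_ (Nat.gcd_dvd_right _ _))
    (Nat.dvd_gcd ((Nat.gcd_dvd_left _ _).trans (mul_dvd_mul_right (Nat.gcd_dvd_left A m) D))
      (Nat.gcd_dvd_right _ _))
  calc Nat.gcd (A * D) (g * m) ∣ Nat.gcd (A * D) (m * D) :=
        Nat.gcd_dvd_gcd_of_dvd_right _ (by rw [mul_comm g]; exact mul_dvd_mul_left m h)
    _ = g * D := Nat.gcd_mul_right A D m

lemma Int.mul_sub_mul_modEq_of_modEq {A B C D D' Q R g m : ℤ} (hA : g ∣ A) (hm : g ∣ m)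
    (hB : B ≡ A * Q [ZMOD m]) (hC : C ≡ A * R [ZMOD m]) (hD : D' ≡ D - R * (A * Q) [ZMOD m]) :
    A * D - B * C ≡ A * D' [ZMOD m * g] := by
  obtain ⟨s, hs⟩ := Int.modEq_iff_dvd.1 hB
  obtain ⟨t, ht⟩ := Int.modEq_iff_dvd.1 hC
  obtain ⟨u, hu⟩ := Int.modEq_iff_dvd.1 hD
  obtain ⟨A₁, rfl⟩ := hA
  obtain ⟨m₁, rfl⟩ := hm
  -- every error term of `B * C - A * Q * A * R` and of `A * (D - D')` carries the factor `m * g`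
  refine Int.modEq_iff_dvd.2 ⟨-(A₁ * u) - A₁ * Q * t - A₁ * R * s + m₁ * s * t, ?_⟩
  linear_combination (-(g * A₁)) * hu - C * hs - (g * A₁ * Q - g * m₁ * s) * ht

namespace ZMod

variable {m : ℕ}

lemma card_mul_eq_zero [NeZero m] (a : ZMod m) :
    Nat.card {x : ZMod m // a * x = 0} = Nat.gcd a.val m := by
  have h := IsAddCyclic.card_nsmulAddMonoidHom_ker (ZMod m) a.val
  rw [Nat.card_zmod, Nat.gcd_comm] at h
  rw [← h]
  exact Nat.card_congr (Equiv.subtypeEquivRight fun x => by simp [nsmul_eq_mul])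

lemma dvd_iff_gcd_val_dvd_val [NeZero m] (a b : ZMod m) :
    a ∣ b ↔ Nat.gcd a.val m ∣ b.val := by
  constructor
  · rintro ⟨q, rfl⟩
    rw [val_mul]
    exact (Nat.dvd_mod_iff (Nat.gcd_dvd_right _ _)).2
      (dvd_mul_of_dvd_left (Nat.gcd_dvd_left _ _) _)
  · rintro ⟨k, hk⟩
    refine ⟨a⁻¹ * k, ?_⟩
    rw [← natCast_zmod_val b, hk, Nat.cast_mul, ← mul_inv_eq_gcd, mul_assoc]

lemma dvd_total_of_prime_pow {p e : ℕ} (hp : p.Prime) (a b : ZMod (p ^ e)) : a ∣ b ∨ b ∣ a := by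
  have : NeZero (p ^ e) := ⟨pow_ne_zero e hp.ne_zero⟩
  simp only [dvd_iff_gcd_val_dvd_val]
  obtain ⟨i, -, hi⟩ := (Nat.dvd_prime_pow hp).1 (Nat.gcd_dvd_right a.val (p ^ e))
  obtain ⟨j, -, hj⟩ := (Nat.dvd_prime_pow hp).1 (Nat.gcd_dvd_right b.val (p ^ e))
  rcases le_total i j with hij | hji
  · exact Or.inl (hi ▸ (pow_dvd_pow p hij).trans (hj ▸ Nat.gcd_dvd_left _ _))
  · exact Or.inr (hj ▸ (pow_dvd_pow p hji).trans (hi ▸ Nat.gcd_dvd_left _ _))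

lemma detContentGcd_swap_rows (a b c d : ZMod m) :
    detContentGcd m c d a b = detContentGcd m a b c d := by
  rw [detContentGcd, detContentGcd, ← Int.neg_gcd, neg_sub, mul_comm (c.val : ℤ),
    mul_comm (d.val : ℤ)]
  congr 3
  ac_rfl

lemma detContentGcd_swap_cols (a b c d : ZMod m) :
    detContentGcd m b a d c = detContentGcd m a b c d := by
  rw [detContentGcd, detContentGcd, ← Int.neg_gcd, neg_sub, mul_comm (b.val : ℤ),
    mul_comm (a.val : ℤ)]
  congr 3
  ac_rfl

lemma intCast_val_modEq_of_eq [NeZero m] {x : ZMod m} {X : ℤ} (h : (X : ZMod m) = x) :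
    (x.val : ℤ) ≡ X [ZMOD m] :=
  (intCast_eq_intCast_iff _ _ m).1 (by rw [h, Int.cast_natCast, natCast_zmod_val])

lemma detContentGcd_mul_mul [NeZero m] (a q r d : ZMod m) (hd : a ∣ d) :
    detContentGcd m a (a * q) (a * r) d =
      Nat.gcd a.val m * Nat.gcd (d - r * (a * q)).val m := by
  have hdvd : ∀ x, a ∣ x → Nat.gcd a.val m ∣ x.val := fun x => (dvd_iff_gcd_val_dvd_val a x).1
  have hd' : a ∣ d - r * (a * q) := dvd_sub hd (dvd_mul_of_dvd_right (dvd_mul_right a q) r)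
  have hcontent : Nat.gcd a.val (Nat.gcd (a * q).val (Nat.gcd (a * r).val
      (Nat.gcd d.val m))) = Nat.gcd a.val m :=
    Nat.dvd_antisymm
      (Nat.dvd_gcd (Nat.gcd_dvd_left _ _) ((Nat.gcd_dvd_right _ _).trans <|
        (Nat.gcd_dvd_right _ _).trans <| (Nat.gcd_dvd_right _ _).trans (Nat.gcd_dvd_right _ _)))
      (Nat.dvd_gcd (Nat.gcd_dvd_left _ _) <| Nat.dvd_gcd (hdvd _ (dvd_mul_right a q)) <|
        Nat.dvd_gcd (hdvd _ (dvd_mul_right a r)) <|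
          Nat.dvd_gcd (hdvd _ hd) (Nat.gcd_dvd_right _ _))
  have hdet : (a.val : ℤ) * d.val - ((a * q).val : ℤ) * (a * r).val ≡
      (a.val : ℤ) * (d - r * (a * q)).val [ZMOD m * (Nat.gcd a.val m : ℕ)] :=
    Int.mul_sub_mul_modEq_of_modEq (Q := q.val) (R := r.val)
      (Int.natCast_dvd_natCast.2 (Nat.gcd_dvd_left _ _))
      (Int.natCast_dvd_natCast.2 (Nat.gcd_dvd_right _ _))
      (intCast_val_modEq_of_eq (by push_cast; simp only [natCast_zmod_val]))
      (intCast_val_modEq_of_eq (by push_cast; simp only [natCast_zmod_val]))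
      (intCast_val_modEq_of_eq (by push_cast; simp only [natCast_zmod_val]))
  rw [detContentGcd, hcontent, ← Int.gcd_emod, hdet, Int.gcd_emod, ← Nat.cast_mul,
    ← Nat.cast_mul, Int.gcd_natCast_natCast, Nat.gcd_mul_mul_gcd_of_gcd_dvd (hdvd _ hd')]

theorem card_homogSolutions_of_dvd [NeZero m] {a b c d : ZMod m} (hb : a ∣ b) (hc : a ∣ c)
    (hd : a ∣ d) : Nat.card (homogSolutions a b c d) = detContentGcd m a b c d := by
  obtain ⟨q, rfl⟩ := hb
  obtain ⟨r, rfl⟩ := hc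
  rw [card_homogSolutions_mul_mul, card_mul_eq_zero, card_mul_eq_zero,
    detContentGcd_mul_mul _ _ _ _ hd]

theorem card_homogSolutions_prime_pow {p e : ℕ} (hp : p.Prime) (a b c d : ZMod (p ^ e)) :
    Nat.card (homogSolutions a b c d) = detContentGcd (p ^ e) a b c d := by
  have : NeZero (p ^ e) := ⟨pow_ne_zero e hp.ne_zero⟩
  obtain ⟨hb, hc, hd⟩ | ⟨ha, hc, hd⟩ | ⟨ha, hb, hd⟩ | ⟨ha, hb, hc⟩ :=
    exists_dvd_all_of_dvd_total (dvd_total_of_prime_pow hp) a b c d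
  · exact card_homogSolutions_of_dvd hb hc hd
  · rw [← card_homogSolutions_swap_cols, ← detContentGcd_swap_cols]
    exact card_homogSolutions_of_dvd ha hd hc
  · rw [← card_homogSolutions_swap_rows, ← detContentGcd_swap_rows]
    exact card_homogSolutions_of_dvd hd ha hb
  · rw [← card_homogSolutions_swap_rows, ← card_homogSolutions_swap_cols,
      ← detContentGcd_swap_rows, ← detContentGcd_swap_cols]
    exact card_homogSolutions_of_dvd hc hb ha

end ZMod

theorem stmt0_general (p : ℕ) (hp : p.Prime) (e : ℕ) (a b c d : ZMod (p^e)) :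
    Nat.card {xy : ZMod (p^e) × ZMod (p^e) //
        a * xy.1 + b * xy.2 = 0 ∧ c * xy.1 + d * xy.2 = 0}
      = Int.gcd ((a.val : ℤ) * (d.val : ℤ) - (b.val : ℤ) * (c.val : ℤ))
          ((p : ℤ)^e * (Nat.gcd a.val (Nat.gcd b.val (Nat.gcd c.val (Nat.gcd d.val (p^e)))) : ℤ)) := by
  rw [← Nat.cast_pow]
  exact ZMod.card_homogSolutions_prime_pow hp a b c d

theorem stmt0 (p : ℕ) (hp : p.Prime) (e : ℕ) (he : 0 < e) (a b c d : ZMod (p^e)) :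
    Nat.card {xy : ZMod (p^e) × ZMod (p^e) //
        a * xy.1 + b * xy.2 = 0 ∧ c * xy.1 + d * xy.2 = 0}
      = Int.gcd ((a.val : ℤ) * (d.val : ℤ) - (b.val : ℤ) * (c.val : ℤ))
          ((p : ℤ)^e * (Nat.gcd a.val (Nat.gcd b.val (Nat.gcd c.val (Nat.gcd d.val (p^e)))) : ℤ)) :=
  stmt0_general p hp e a b c d
end

section
/- Let p be a prime, e a positive integer, and a,b,c,d in Z/p^e with gcd(a,b,c,d,p)=1 (i.e., at least one of a,b,c,d is a unit mod p). Then the number of pairs (x,y) in (Z/p^e)^2 satisfying a*x+b*y ≡ 0 and c*x+d*y ≡ 0 (mod p^e) equals gcd(a*d-b*c, p^e). -/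
open scoped Classical

/-! Since `gcd(a, b, c, d, p) = 1`, some coefficient is a unit; permuting the equations and the
unknowns makes it `a`. Eliminating `x` then leaves the single equation `(ad - bc) y = 0`. In
`ZMod n` the image of `y ↦ D y` is the cyclic subgroup generated by `D`, of order
`n / gcd(n, D)`, so its kernel has `gcd(n, D)` elements. -/

theorem ZMod.card_mul_eq_zero_s1 {n : ℕ} [NeZero n] (D : ZMod n) :
    Nat.card {y : ZMod n // D * y = 0} = n.gcd D.val := by
  set f := AddMonoidHom.mulLeft D
  have hrange : f.range = AddSubgroup.zmultiples D := by
    ext x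
    simp only [AddMonoidHom.mem_range, AddSubgroup.mem_zmultiples_iff, f,
      AddMonoidHom.coe_mulLeft, zsmul_eq_mul]
    constructor
    · rintro ⟨y, rfl⟩
      exact ⟨y.val, by rw [Int.cast_natCast, ZMod.natCast_zmod_val, mul_comm]⟩
    · rintro ⟨k, rfl⟩
      exact ⟨k, mul_comm _ _⟩
  have hcard : Nat.card f.ker * Nat.card f.range = n := by
    rw [← AddSubgroup.index_ker, AddSubgroup.card_mul_index, Nat.card_zmod]
  have horder : Nat.card f.range = n / n.gcd D.val := by
    rw [hrange, Nat.card_zmultiples, ← ZMod.addOrderOf_coe _ (NeZero.ne n),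
      ZMod.natCast_zmod_val]
  have hpos : 0 < n / n.gcd D.val :=
    Nat.div_pos (Nat.gcd_le_left _ (NeZero.pos n)) (Nat.gcd_pos_of_pos_left _ (NeZero.pos n))
  rw [horder] at hcard
  refine Nat.eq_of_mul_eq_mul_right hpos ?_
  rwa [Nat.mul_div_cancel' (Nat.gcd_dvd_left _ _)]

section LinearSystem

variable {R : Type*} [CommRing R]

def linearSolutions (a b c d : R) : Set (R × R) :=
  {xy | a * xy.1 + b * xy.2 = 0 ∧ c * xy.1 + d * xy.2 = 0}

theorem card_linearSolutions_swap_rows (a b c d : R) :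
    Nat.card (linearSolutions c d a b) = Nat.card (linearSolutions a b c d) :=
  Nat.card_congr (Equiv.subtypeEquivRight fun _ => and_comm)

theorem card_linearSolutions_swap_cols (a b c d : R) :
    Nat.card (linearSolutions b a d c) = Nat.card (linearSolutions a b c d) :=
  Nat.card_congr <| (Equiv.prodComm R R).subtypeEquiv fun xy => by
    simp only [linearSolutions, Set.mem_ofPred_eq, Equiv.prodComm_apply, Prod.fst_swap,
      Prod.snd_swap, add_comm]

theorem card_neg_mul_eq_zero (D : R) :
    Nat.card {y : R // -D * y = 0} = Nat.card {y : R // D * y = 0} :=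
  Nat.card_congr (Equiv.subtypeEquivRight fun _ => by rw [neg_mul, neg_eq_zero])

/-- With `a` invertible, `x = -a⁻¹ b y` is forced by the first equation and the second becomes
`a⁻¹ (a d - b c) y = 0`. -/
theorem card_linearSolutions_of_isUnit {a : R} (ha : IsUnit a) (b c d : R) :
    Nat.card (linearSolutions a b c d) = Nat.card {y : R // (a * d - b * c) * y = 0} := by
  obtain ⟨u, rfl⟩ := ha
  have hu : (↑u⁻¹ : R) * u = 1 := u.inv_mul
  refine Nat.card_congr
    { toFun := fun xy => ⟨xy.1.2, ?_⟩
      invFun := fun y => ⟨(-(↑u⁻¹ * b * y.1), y.1), ?_, ?_⟩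
      left_inv := ?_
      right_inv := fun _ => rfl }
  · obtain ⟨⟨x, y⟩, h₁, h₂⟩ := xy
    linear_combination (u : R) * h₂ - c * h₁
  · linear_combination (-(b * y.1)) * hu
  · linear_combination (↑u⁻¹ : R) * y.2 - (d * y.1) * hu
  · rintro ⟨⟨x, y⟩, h₁, h₂⟩
    ext
    · linear_combination (-(↑u⁻¹ : R)) * h₁ + x * hu
    · rfl

theorem card_linearSolutions_of_isUnit_or {a b c d : R}
    (h : IsUnit a ∨ IsUnit b ∨ IsUnit c ∨ IsUnit d) :
    Nat.card (linearSolutions a b c d) = Nat.card {y : R // (a * d - b * c) * y = 0} := by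
  rcases h with ha | hb | hc | hd
  · exact card_linearSolutions_of_isUnit ha b c d
  · rw [← card_linearSolutions_swap_cols, card_linearSolutions_of_isUnit hb,
      ← card_neg_mul_eq_zero, neg_sub]
  · rw [← card_linearSolutions_swap_rows, card_linearSolutions_of_isUnit hc,
      ← card_neg_mul_eq_zero, neg_sub, mul_comm a, mul_comm b]
  · rw [← card_linearSolutions_swap_rows, ← card_linearSolutions_swap_cols,
      card_linearSolutions_of_isUnit hd, mul_comm d, mul_comm c]

end LinearSystem

theorem ZMod.gcd_val_intCast {n : ℕ} [NeZero n] (z : ℤ) :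
    (z : ZMod n).val.gcd n = z.gcd n := by
  rw [← Int.gcd_emod, ← ZMod.val_intCast, Int.gcd_natCast_natCast]

theorem ZMod.prime_dvd_val_of_not_isUnit {p e : ℕ} (hp : p.Prime) (he : 0 < e)
    {x : ZMod (p ^ e)} (hx : ¬IsUnit x) : p ∣ x.val := by
  have : NeZero (p ^ e) := ⟨pow_ne_zero e hp.ne_zero⟩
  rw [← ZMod.natCast_zmod_val x, ZMod.isUnit_natCast_iff_not_dvd_pow hp he, not_not] at hx
  exact hx

theorem stmt1 (p : ℕ) (hp : p.Prime) (e : ℕ) (he : 0 < e) (a b c d : ZMod (p^e))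
    (hg : Nat.gcd a.val (Nat.gcd b.val (Nat.gcd c.val (Nat.gcd d.val p))) = 1) :
    Nat.card {xy : ZMod (p^e) × ZMod (p^e) //
        a * xy.1 + b * xy.2 = 0 ∧ c * xy.1 + d * xy.2 = 0}
      = Int.gcd ((a.val : ℤ) * (d.val : ℤ) - (b.val : ℤ) * (c.val : ℤ)) ((p : ℤ)^e) := by
  have : NeZero (p ^ e) := ⟨pow_ne_zero e hp.ne_zero⟩
  have hunit : IsUnit a ∨ IsUnit b ∨ IsUnit c ∨ IsUnit d := by
    by_contra! h
    obtain ⟨ha, hb, hc, hd⟩ := h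
    refine hp.not_dvd_one (hg ▸ ?_)
    simp only [Nat.dvd_gcd_iff, ZMod.prime_dvd_val_of_not_isUnit hp he, ha, hb, hc, hd,
      not_false_eq_true, dvd_refl, and_self]
  have hdet : (((a.val : ℤ) * d.val - b.val * c.val : ℤ) : ZMod (p ^ e)) = a * d - b * c := by
    push_cast [ZMod.natCast_zmod_val]
    rfl
  change Nat.card (linearSolutions a b c d) = _
  rw [card_linearSolutions_of_isUnit_or hunit, ZMod.card_mul_eq_zero_s1, ← hdet, Nat.gcd_comm,
    ZMod.gcd_val_intCast, Nat.cast_pow]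
end

section
/- Let p be a prime, e ≥ 1, n ≥ 2, and u, v ∈ (Z/p^e)^n with gcd(u_1,...,u_n,p)=1. Define ξ_{ij} = u_i v_j - u_j v_i for i,j ∈ [n], and let α = min over i,j of the p-adic valuation ν_p(ξ_{ij}) (lifting to integer representatives, with ν_p computed mod p^e, i.e., α = min(ν_p(ξ_{ij}), e)). Then there exist indices i, j ∈ [n] such that gcd(u_i, u_j, v_i, v_j, p) = 1 and ν_p(ξ_{ij}) = α. -/
open scoped Classical

section Aux
variable {p e : ℕ}

lemma nuVal_le (hp : p.Prime) (z : ZMod (p^e)) : nuVal p e z ≤ e := by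
  haveI : Fact p.Prime := ⟨hp⟩
  haveI : NeZero (p^e) := ⟨pow_ne_zero e hp.pos.ne'⟩
  unfold nuVal
  split
  · exact le_rfl
  · rename_i hz
    have hv : z.val ≠ 0 := by
      intro h
      apply hz
      rw [← ZMod.natCast_zmod_val z, h]
      simp
    have h1 : p ^ padicValNat p z.val ∣ z.val := pow_padicValNat_dvd
    have h2 : p ^ padicValNat p z.val ≤ z.val := Nat.le_of_dvd (Nat.pos_of_ne_zero hv) h1
    have h3 : z.val < p ^ e := z.val_lt
    exact le_of_lt ((Nat.pow_lt_pow_iff_right hp.one_lt).mp (lt_of_le_of_lt h2 h3))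

lemma cast_pow_dvd_iff (hp : p.Prime) {k : ℕ} (hk : k ≤ e) (z : ZMod (p^e)) :
    ((p : ZMod (p^e)))^k ∣ z ↔ k ≤ nuVal p e z := by
  haveI : Fact p.Prime := ⟨hp⟩
  haveI : NeZero (p^e) := ⟨pow_ne_zero e hp.pos.ne'⟩
  have key : ((p : ZMod (p^e)))^k ∣ z ↔ p ^ k ∣ z.val := by
    constructor
    · rintro ⟨w, rfl⟩
      have h1 : ((p:ZMod (p^e)))^k * w = ((p^k * w.val : ℕ) : ZMod (p^e)) := by
        push_cast [ZMod.natCast_zmod_val]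
        ring
      rw [h1, ZMod.val_natCast]
      exact (Nat.dvd_mod_iff (pow_dvd_pow p hk)).mpr ⟨w.val, rfl⟩
    · rintro ⟨w, hw⟩
      refine ⟨(w : ZMod (p^e)), ?_⟩
      rw [← ZMod.natCast_zmod_val z, hw]
      push_cast
      ring
  rw [key]
  unfold nuVal
  split
  · rename_i hz
    subst hz
    simp [hk]
  · rename_i hz
    have hv : z.val ≠ 0 := by
      intro h
      apply hz
      rw [← ZMod.natCast_zmod_val z, h]
      simp
    exact padicValNat_dvd_iff_le hv

lemma nuVal_mul_unit (hp : p.Prime) {x : ZMod (p^e)} (hx : ¬ p ∣ x.val) (z : ZMod (p^e)) :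
    nuVal p e (x * z) = nuVal p e z := by
  haveI : NeZero (p^e) := ⟨pow_ne_zero e hp.pos.ne'⟩
  have hxu : IsUnit x := by
    rw [← ZMod.natCast_zmod_val x, ZMod.isUnit_iff_coprime]
    exact hp.coprime_pow_of_not_dvd hx
  have hd : ∀ k, ((p : ZMod (p^e)))^k ∣ x * z ↔ ((p : ZMod (p^e)))^k ∣ z := fun k =>
    hxu.dvd_mul_left
  apply le_antisymm
  · exact (cast_pow_dvd_iff hp (nuVal_le hp (x*z)) z).mp
      ((hd _).mp ((cast_pow_dvd_iff hp (nuVal_le hp (x*z)) (x*z)).mpr le_rfl))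
  · exact (cast_pow_dvd_iff hp (nuVal_le hp z) (x*z)).mp
      ((hd _).mpr ((cast_pow_dvd_iff hp (nuVal_le hp z) z).mpr le_rfl))

end Aux


theorem stmt3 (p e n : ℕ) (hp : p.Prime) (he : 1 ≤ e) (hn : 2 ≤ n)
    (u v : Fin n → ZMod (p^e)) (hu : Primitive u) :
    ∃ i j : Fin n,
      Nat.gcd (u i).val (Nat.gcd (u j).val (Nat.gcd (v i).val (Nat.gcd (v j).val p))) = 1 ∧
      ∀ k l : Fin n,
        nuVal p e (u i * v j - u j * v i) ≤ nuVal p e (u k * v l - u l * v k) := by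
  haveI : NeZero (p^e) := ⟨pow_ne_zero e hp.pos.ne'⟩
  -- find i₀ with p ∤ u i₀
  have hex : ∃ i₀ : Fin n, ¬ p ∣ (u i₀).val := by
    by_contra h
    push_neg at h
    have h1 : p ∣ Finset.univ.gcd fun i => (u i).val :=
      Finset.dvd_gcd fun i _ => h i
    have h2 : p ∣ Nat.gcd (Finset.univ.gcd fun i => (u i).val) (p^e) :=
      Nat.dvd_gcd h1 (dvd_pow_self p (by omega))
    rw [hu] at h2
    exact hp.one_lt.ne' (Nat.dvd_one.mp h2)
  obtain ⟨i₀, hi₀⟩ := hex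
  -- choose j minimizing F
  set F : Fin n → ℕ := fun j => nuVal p e (u i₀ * v j - u j * v i₀) with hF
  haveI : Nonempty (Fin n) := ⟨⟨0, by omega⟩⟩
  obtain ⟨j, -, hj⟩ := Finset.exists_min_image Finset.univ F ⟨Classical.arbitrary (Fin n), Finset.mem_univ _⟩
  refine ⟨i₀, j, ?_, ?_⟩
  · have hg1 : Nat.gcd (u i₀).val (Nat.gcd (u j).val (Nat.gcd (v i₀).val (Nat.gcd (v j).val p)))
        ∣ (u i₀).val := Nat.gcd_dvd_left _ _
    have hg2 : Nat.gcd (u i₀).val (Nat.gcd (u j).val (Nat.gcd (v i₀).val (Nat.gcd (v j).val p)))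
        ∣ p := ((((Nat.gcd_dvd_right _ _).trans (Nat.gcd_dvd_right _ _)).trans
      (Nat.gcd_dvd_right _ _)).trans (Nat.gcd_dvd_right _ _))
    rcases hp.eq_one_or_self_of_dvd _ hg2 with h | h
    · exact h
    · rw [h] at hg1
      exact absurd hg1 hi₀
  · intro k l
    have key : nuVal p e (u k * v l - u l * v k)
        = nuVal p e (u i₀ * (u k * v l - u l * v k)) := (nuVal_mul_unit hp hi₀ _).symm
    rw [key]
    have hid : u i₀ * (u k * v l - u l * v k)
        = u k * (u i₀ * v l - u l * v i₀) - u l * (u i₀ * v k - u k * v i₀) := by ring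
    rw [hid]
    set m := min (F l) (F k) with hm
    have hml : m ≤ F l := min_le_left _ _
    have hmk : m ≤ F k := min_le_right _ _
    have hme : m ≤ e := hml.trans (nuVal_le hp _)
    have d1 : ((p : ZMod (p^e)))^m ∣ u k * (u i₀ * v l - u l * v i₀) :=
      Dvd.dvd.mul_left ((cast_pow_dvd_iff hp hme _).mpr hml) _
    have d2 : ((p : ZMod (p^e)))^m ∣ u l * (u i₀ * v k - u k * v i₀) :=
      Dvd.dvd.mul_left ((cast_pow_dvd_iff hp hme _).mpr hmk) _
    have d3 := dvd_sub d1 d2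
    have := (cast_pow_dvd_iff hp hme _).mp d3
    calc F j ≤ m := le_min (hj l (Finset.mem_univ l)) (hj k (Finset.mem_univ k))
      _ ≤ _ := this
end

section
/- Let m > 1, n > 1 be integers. Then the number of equivalence classes of vectors u ∈ (Z/m)^n with gcd(u_1,...,u_n,m)=1 under the relation u ∼ v iff v = λu for some unit λ ∈ (Z/m)^*, equals m^{n-1} · ∏_{p | m} (1 + 1/p + ... + 1/p^{n-1}), where the product is over prime divisors p of m. -/
open scoped Classical

/-!
The units of `ZMod m` act freely on primitive vectors, so there are `θ · φ(m)` of them. Counting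
them instead by Möbius inversion over the common divisors of the entries gives
`∑_{d ∣ m} μ(d) (m/d)^n = m^n ∏_{p ∣ m} (1 - p^{-n})`. Divide by `φ(m) = m ∏_{p ∣ m} (1 - 1/p)`
and use `1 - p^{-n} = (1 - 1/p)(1 + 1/p + ⋯ + 1/p^{n-1})`.
-/

open Finset ArithmeticFunction ArithmeticFunction.Moebius

namespace ZMod

variable {m d : ℕ}

lemma dvd_val_mul (hd : d ∣ m) (a : ZMod m) {b : ZMod m} (hb : d ∣ b.val) : d ∣ (a * b).val := by
  rw [val_mul]
  exact (Nat.dvd_mod_iff hd).mpr (hb.mul_left _)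

lemma dvd_val_iff_mem_zmultiples [NeZero m] (hd : d ∣ m) {x : ZMod m} :
    d ∣ x.val ↔ x ∈ AddSubgroup.zmultiples (d : ZMod m) := by
  rw [AddSubgroup.mem_zmultiples_iff]
  constructor
  · rintro ⟨k, hk⟩
    refine ⟨k, ?_⟩
    rw [← natCast_zmod_val x, hk, zsmul_eq_mul, Int.cast_natCast, Nat.cast_mul, mul_comm]
  · rintro ⟨k, rfl⟩
    rw [zsmul_eq_mul]
    refine dvd_val_mul hd _ ?_
    rw [val_natCast]
    exact (Nat.dvd_mod_iff hd).mpr dvd_rfl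

lemma card_dvd_val [NeZero m] (hd : d ∣ m) : Nat.card {x : ZMod m // d ∣ x.val} = m / d := by
  rw [Nat.card_congr (Equiv.subtypeEquivRight fun x => dvd_val_iff_mem_zmultiples hd),
    Nat.card_zmultiples, addOrderOf_coe _ (NeZero.ne m), Nat.gcd_eq_right hd]

end ZMod

section Primitive

variable {m n : ℕ}

def content (u : Fin n → ZMod m) : ℕ := Nat.gcd (univ.gcd fun i => (u i).val) m

lemma primitive_iff_content_eq_one (u : Fin n → ZMod m) : Primitive u ↔ content u = 1 := Iff.rfl

lemma dvd_content_iff {u : Fin n → ZMod m} {d : ℕ} :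
    d ∣ content u ↔ (∀ i, d ∣ (u i).val) ∧ d ∣ m := by
  simp [content, Nat.dvd_gcd_iff, Finset.dvd_gcd_iff]

lemma primitive_iff_forall_dvd {u : Fin n → ZMod m} :
    Primitive u ↔ ∀ d, (∀ i, d ∣ (u i).val) → d ∣ m → d = 1 := by
  refine ⟨fun hu d hdu hdm => Nat.dvd_one.mp (hu ▸ dvd_content_iff.mpr ⟨hdu, hdm⟩), fun h => ?_⟩
  exact h _ (dvd_content_iff.mp dvd_rfl).1 (dvd_content_iff.mp dvd_rfl).2

lemma Primitive.units_smul {u : Fin n → ZMod m} (hu : Primitive u) (a : (ZMod m)ˣ) :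
    Primitive (a • u) := by
  rw [primitive_iff_forall_dvd] at hu ⊢
  refine fun d hd hdm => hu d (fun i => ?_) hdm
  simpa [Units.smul_def, ← mul_assoc] using ZMod.dvd_val_mul hdm ↑a⁻¹ (hd i)

-- `a - 1` annihilates every entry of `u`, hence also their gcd with `m`, which is `1`.
lemma Primitive.eq_one_of_smul_eq [NeZero m] {u : Fin n → ZMod m} (hu : Primitive u)
    {a : (ZMod m)ˣ} (h : a • u = u) : a = 1 := by
  set x : ZMod m := a - 1
  have hx (i : Fin n) : m ∣ x.val * (u i).val := by
    have : x * u i = 0 := by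
      simp only [x, sub_mul, one_mul, sub_eq_zero]
      simpa [Units.smul_def] using congrFun h i
    rwa [← ZMod.val_eq_zero, ZMod.val_mul, ← Nat.dvd_iff_mod_eq_zero] at this
  have hxG : m ∣ x.val * univ.gcd fun i => (u i).val := by
    rw [← normalize_eq x.val, ← Finset.gcd_mul_left]
    exact Finset.dvd_gcd fun i _ => hx i
  have hxm : m ∣ x.val := by
    have := Nat.dvd_gcd hxG (dvd_mul_left m x.val)
    rwa [Nat.gcd_mul_left, show Nat.gcd _ m = 1 from hu, mul_one] at this
  have hx0 : x = 0 := by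
    rw [← ZMod.val_eq_zero]
    exact Nat.eq_zero_of_dvd_of_lt hxm (ZMod.val_lt x)
  exact Units.ext (sub_eq_zero.mp hx0)

instance : MulAction (ZMod m)ˣ {u : Fin n → ZMod m // Primitive u} where
  smul a u := ⟨a • u.1, u.2.units_smul a⟩
  one_smul u := Subtype.ext (one_smul _ u.1)
  mul_smul a b u := Subtype.ext (mul_smul a b u.1)

lemma projSetoid_eq_orbitRel :
    projSetoid m n = MulAction.orbitRel (ZMod m)ˣ {u : Fin n → ZMod m // Primitive u} := by
  refine Setoid.ext fun u v => ⟨fun ⟨a, h⟩ => ⟨a⁻¹, ?_⟩, fun ⟨a, h⟩ => ⟨a⁻¹, ?_⟩⟩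
  · refine Subtype.ext (funext fun i => ?_)
    change ((a⁻¹ : (ZMod m)ˣ) : ZMod m) * v.1 i = u.1 i
    simp [h]
  · subst h
    funext i
    change v.1 i = _ * (a * v.1 i)
    simp

lemma card_primitive_eq_theta_mul_totient [NeZero m] :
    Nat.card {u : Fin n → ZMod m // Primitive u} = theta n m * m.totient := by
  have hfree (u : {u : Fin n → ZMod m // Primitive u}) : MulAction.stabilizer (ZMod m)ˣ u = ⊥ :=
    (Subgroup.eq_bot_iff_forall _).mpr fun a ha => u.2.eq_one_of_smul_eq (congrArg Subtype.val ha)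
  rw [Nat.card_congr (MulAction.selfEquivOrbitsQuotientProd hfree), Nat.card_prod,
    ← projSetoid_eq_orbitRel, theta, Nat.card_eq_fintype_card (α := (ZMod m)ˣ),
    ZMod.card_units_eq_totient]

lemma sum_divisors_moebius {R : Type*} [Ring R] (k : ℕ) :
    ∑ d ∈ k.divisors, (μ d : R) = if k = 1 then 1 else 0 := by
  simpa only [coe_mul_zeta_apply, intCoe_apply, one_apply] using
    congrArg (fun f => f k) (coe_moebius_mul_coe_zeta (R := R))

lemma card_forall_dvd_val [NeZero m] {d : ℕ} (hd : d ∣ m) :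
    Nat.card {u : Fin n → ZMod m // ∀ i, d ∣ (u i).val} = (m / d) ^ n := by
  rw [Nat.card_congr (Equiv.subtypePiEquivPi (p := fun _ x => d ∣ ZMod.val x)), Nat.card_pi,
    Finset.prod_const, ZMod.card_dvd_val hd, Finset.card_univ, Fintype.card_fin]

lemma card_primitive_eq_sum_moebius {R : Type*} [CommRing R] [NeZero m] :
    (Nat.card {u : Fin n → ZMod m // Primitive u} : R) =
      ∑ d ∈ m.divisors, (μ d : R) * ((m / d : ℕ) : R) ^ n := by
  have hcard (d : ℕ) (hd : d ∣ m) : #{u : Fin n → ZMod m | d ∣ content u} = (m / d) ^ n := by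
    rw [← card_forall_dvd_val hd, Nat.card_eq_fintype_card, Fintype.card_subtype]
    simp only [dvd_content_iff, hd, and_true]
  calc (Nat.card {u : Fin n → ZMod m // Primitive u} : R)
      = ∑ u : Fin n → ZMod m, if content u = 1 then 1 else 0 := by
        simp only [Nat.card_eq_fintype_card, Fintype.card_subtype, Finset.sum_boole,
          primitive_iff_content_eq_one]
    _ = ∑ u : Fin n → ZMod m, ∑ d ∈ m.divisors, if d ∣ content u then (μ d : R) else 0 := by
        refine Finset.sum_congr rfl fun u _ => ?_
        rw [← sum_divisors_moebius, ← Finset.sum_filter,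
          Nat.divisors_filter_dvd_of_dvd (NeZero.ne m) (dvd_content_iff.mp dvd_rfl).2]
    _ = ∑ d ∈ m.divisors, (μ d : R) * ((m / d : ℕ) : R) ^ n := by
        rw [Finset.sum_comm]
        refine Finset.sum_congr rfl fun d hd => ?_
        rw [← Finset.sum_filter, Finset.sum_const, hcard d (Nat.dvd_of_mem_divisors hd),
          nsmul_eq_mul, mul_comm, Nat.cast_pow]

end Primitive

open UniqueFactorizationMonoid in
lemma ArithmeticFunction.IsMultiplicative.sum_divisors_moebius_mul {R : Type*} [CommRing R]
    {f : ArithmeticFunction R} (hf : f.IsMultiplicative) {m : ℕ} (hm : m ≠ 0) :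
    ∑ d ∈ m.divisors, μ d * f d = ∏ p ∈ m.primeFactors, (1 - f p) := by
  rw [← Nat.primeFactors_radical, hf.prodPrimeFactors_one_sub_of_squarefree _ squarefree_radical]
  refine (sum_subset (Nat.divisors_subset_of_dvd hm radical_dvd_self) fun d hd hnd => ?_).symm
  have : ¬ Squarefree d := fun hsq => hnd <| Nat.mem_divisors.mpr
    ⟨(dvd_radical_iff hsq.isRadical hm).mpr (Nat.dvd_of_mem_divisors hd), radical_ne_zero⟩
  simp [moebius_eq_zero_of_not_squarefree this]

noncomputable def invPow (n : ℕ) : ArithmeticFunction ℚ :=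
  ⟨fun d => if d = 0 then 0 else ((d : ℚ) ^ n)⁻¹, if_pos rfl⟩

lemma invPow_apply (n : ℕ) {d : ℕ} (hd : d ≠ 0) : invPow n d = ((d : ℚ) ^ n)⁻¹ := if_neg hd

lemma isMultiplicative_invPow (n : ℕ) : (invPow n).IsMultiplicative := by
  refine IsMultiplicative.iff_ne_zero.mpr ⟨by simp [invPow_apply], fun {a b} ha hb _ => ?_⟩
  rw [invPow_apply n (mul_ne_zero ha hb), invPow_apply n ha, invPow_apply n hb, Nat.cast_mul,
    mul_pow, mul_inv]

lemma sum_divisors_moebius_mul_div_pow {m : ℕ} (hm : m ≠ 0) (n : ℕ) :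
    ∑ d ∈ m.divisors, (μ d : ℚ) * ((m / d : ℕ) : ℚ) ^ n
      = (m : ℚ) ^ n * ∏ p ∈ m.primeFactors, (1 - ((p : ℚ) ^ n)⁻¹) := by
  have hprod : ∏ p ∈ m.primeFactors, (1 - ((p : ℚ) ^ n)⁻¹)
      = ∏ p ∈ m.primeFactors, (1 - invPow n p) :=
    prod_congr rfl fun p hp => by rw [invPow_apply n (Nat.prime_of_mem_primeFactors hp).ne_zero]
  rw [hprod, ← (isMultiplicative_invPow n).sum_divisors_moebius_mul hm, mul_sum]
  refine sum_congr rfl fun d hd => ?_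
  have hd0 : d ≠ 0 := Nat.ne_of_gt (Nat.pos_of_mem_divisors hd)
  rw [invPow_apply n hd0, Nat.cast_div (Nat.dvd_of_mem_divisors hd) (Nat.cast_ne_zero.mpr hd0),
    div_pow]
  field_simp

lemma one_sub_inv_pow_eq_mul_geom_sum {K : Type*} [Field K] (x : K) (n : ℕ) :
    1 - (x ^ n)⁻¹ = (1 - x⁻¹) * ∑ k ∈ range n, 1 / x ^ k := by
  simp_rw [one_div, ← inv_pow, mul_neg_geom_sum]

theorem stmt4 (m n : ℕ) (hm : 1 < m) (hn : 1 < n) :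
    (theta n m : ℚ) = (m : ℚ)^(n-1) *
      ∏ p ∈ m.primeFactors, ∑ k ∈ Finset.range n, (1 : ℚ) / (p : ℚ)^k := by
  have : NeZero m := ⟨by omega⟩
  have hcount : (theta n m : ℚ) * m.totient
      = m ^ n * ∏ p ∈ m.primeFactors, (1 - ((p : ℚ) ^ n)⁻¹) := by
    rw [← sum_divisors_moebius_mul_div_pow (NeZero.ne m), ← card_primitive_eq_sum_moebius,
      card_primitive_eq_theta_mul_totient, Nat.cast_mul]
  have htot : (m.totient : ℚ) ≠ 0 := by exact_mod_cast (Nat.totient_pos.mpr (by omega)).ne'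
  simp only [one_sub_inv_pow_eq_mul_geom_sum, prod_mul_distrib] at hcount
  apply mul_right_cancel₀ htot
  rw [hcount, Nat.totient_eq_mul_prod_factors, ← pow_sub_one_mul (by omega : n ≠ 0)]
  ring
end

section
/- Let p be a prime, e ≥ 2, n ≥ 2. The map δ: P_{n,p^e} → P_{n,p^{e-1}} induced by coordinatewise reduction mod p^{e-1} is well-defined, surjective, and every fiber has exactly p^{n-1} elements. -/
open scoped Classical

/-! ### Auxiliary lemmas -/

lemma prim_iff {p f n : ℕ} (hp : p.Prime) (hf : 1 ≤ f) (u : Fin n → ZMod (p^f)) :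
    Primitive u ↔ ∃ i, ¬ p ∣ (u i).val := by
  unfold Primitive
  rw [← Nat.coprime_iff_gcd_eq_one, Nat.coprime_pow_right_iff hf, Nat.coprime_comm,
    hp.coprime_iff_not_dvd, Finset.dvd_gcd_iff]
  push_neg
  simp

lemma card_free_quotient {G β : Type*} [Group G] [MulAction G β] [Finite β] [Finite G]
    (free : ∀ (g : G) (b : β), g • b = b → g = 1) :
    Nat.card β = Nat.card (MulAction.orbitRel.Quotient G β) * Nat.card G := by
  have e1 := MulAction.selfEquivSigmaOrbits G β
  have e2 : ∀ b : β, MulAction.orbit G b ≃ G := by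
    intro b
    have hstab : MulAction.stabilizer G b = ⊥ := by
      ext g
      simp only [MulAction.mem_stabilizer_iff, Subgroup.mem_bot]
      exact ⟨fun h => free g b h, fun h => by simp [h]⟩
    refine (MulAction.orbitEquivQuotientStabilizer G b).trans ?_
    rw [hstab]
    exact (QuotientGroup.quotientBot (G := G)).toEquiv
  have e3 : β ≃ (MulAction.orbitRel.Quotient G β) × G :=
    e1.trans ((Equiv.sigmaCongrRight fun (ω : MulAction.orbitRel.Quotient G β) => e2 ω.out).trans
      (Equiv.sigmaEquivProd _ _))
  rw [Nat.card_congr e3, Nat.card_prod]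

lemma card_fiber_addhom {A B : Type*} [AddCommGroup A] [AddCommGroup B] [Finite A] [Finite B]
    (f : A →+ B) (hf : Function.Surjective f) (b : B) :
    Nat.card B * Nat.card {a : A // f a = b} = Nat.card A := by
  obtain ⟨a0, ha0⟩ := hf b
  have e1 : {a : A // f a = b} ≃ f.ker := by
    refine ⟨fun a => ⟨a.1 - a0, by simp [AddMonoidHom.mem_ker, map_sub, a.2, ha0]⟩, fun k => ⟨k.1 + a0, by have hk := k.2; rw [AddMonoidHom.mem_ker] at hk; simp [map_add, hk, ha0]⟩, fun a => by ext; simp, fun k => by ext; simp⟩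
  rw [Nat.card_congr e1]
  have := AddSubgroup.card_eq_card_quotient_mul_card_addSubgroup f.ker
  rw [Nat.card_congr (QuotientAddGroup.quotientKerEquivOfSurjective f hf).toEquiv] at this
  omega

lemma val_red {p e n : ℕ} (hp : p.Prime) (u : Fin n → ZMod (p^e)) (i : Fin n) :
    (red p e u i).val = (u i).val % p^(e-1) := by
  haveI : NeZero (p^e) := ⟨pow_ne_zero _ hp.pos.ne'⟩
  haveI : NeZero (p^(e-1)) := ⟨pow_ne_zero _ hp.pos.ne'⟩
  have h : red p e u i = (((u i).val : ℕ) : ZMod (p^(e-1))) := by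
    simp only [red]
    conv_lhs => rw [← ZMod.natCast_rightInverse (u i)]
    rw [map_natCast]
  rw [h, ZMod.val_natCast]

lemma dvd_red_iff {p e n : ℕ} (hp : p.Prime) (he : 2 ≤ e) (u : Fin n → ZMod (p^e)) (i : Fin n) :
    p ∣ (red p e u i).val ↔ p ∣ (u i).val := by
  rw [val_red hp, Nat.dvd_mod_iff (dvd_pow_self p (by omega : e - 1 ≠ 0))]

lemma prim_red {p e n : ℕ} (hp : p.Prime) (he : 2 ≤ e) {u : Fin n → ZMod (p^e)}
    (hu : Primitive u) : Primitive (red p e u) := by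
  obtain ⟨i, hi⟩ := (prim_iff hp (by omega) u).1 hu
  exact (prim_iff hp (by omega) _).2 ⟨i, by rwa [dvd_red_iff hp he]⟩

lemma prim_lift {p e n : ℕ} (hp : p.Prime) (he : 2 ≤ e) {u : Fin n → ZMod (p^e)}
    {w : Fin n → ZMod (p^(e-1))} (hru : red p e u = w) (hw : Primitive w) : Primitive u := by
  obtain ⟨i, hi⟩ := (prim_iff hp (by omega) w).1 hw
  refine (prim_iff hp (by omega) u).2 ⟨i, fun h => hi ?_⟩
  rw [← hru]
  exact (dvd_red_iff hp he u i).2 h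

lemma exists_isUnit_of_prim {p f n : ℕ} (hp : p.Prime) (hf : 1 ≤ f)
    {w : Fin n → ZMod (p^f)} (hw : Primitive w) : ∃ i, IsUnit (w i) := by
  haveI : NeZero (p^f) := ⟨pow_ne_zero _ hp.pos.ne'⟩
  obtain ⟨i, hi⟩ := (prim_iff hp hf w).1 hw
  refine ⟨i, ?_⟩
  rw [← ZMod.natCast_rightInverse (w i), ZMod.isUnit_iff_coprime]
  exact Nat.Coprime.pow_right _ (Nat.coprime_comm.mp (hp.coprime_iff_not_dvd.mpr hi))

theorem stmt6 (p e n : ℕ) (hp : p.Prime) (he : 2 ≤ e) (hn : 2 ≤ n) :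
    ∃ δ : ProjPt (p^e) n → ProjPt (p^(e-1)) n,
      (∀ (u : Fin n → ZMod (p^e)) (hu : Primitive u),
        ∃ hu' : Primitive (red p e u),
          δ (Quotient.mk (projSetoid (p^e) n) ⟨u, hu⟩)
            = Quotient.mk (projSetoid (p^(e-1)) n) ⟨red p e u, hu'⟩) ∧
      Function.Surjective δ ∧
      ∀ W : ProjPt (p^(e-1)) n, Nat.card {U : ProjPt (p^e) n // δ U = W} = p^(n-1) := by
  haveI : NeZero (p^e) := ⟨pow_ne_zero _ hp.pos.ne'⟩
  haveI : NeZero (p^(e-1)) := ⟨pow_ne_zero _ hp.pos.ne'⟩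
  set hdvd : p^(e-1) ∣ p^e := pow_dvd_pow p (Nat.sub_le e 1) with hdvd_def
  -- the reduction map δ
  let δ : ProjPt (p^e) n → ProjPt (p^(e-1)) n :=
    Quotient.lift (s := projSetoid (p^e) n)
      (fun x => Quotient.mk (projSetoid (p^(e-1)) n) ⟨red p e x.1, prim_red hp he x.2⟩)
      (by
        rintro a b ⟨lam, hlam⟩
        apply Quotient.sound
        refine ⟨ZMod.unitsMap hdvd lam, ?_⟩
        funext i
        show red p e b.1 i = _
        rw [hlam]
        simp [red, map_mul, ZMod.unitsMap]
        )
  refine ⟨δ, fun u hu => ⟨prim_red hp he hu, rfl⟩, ?_, ?_⟩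
  · -- surjectivity
    intro W
    obtain ⟨⟨w, hw⟩, rfl⟩ := W.exists_rep
    set u : Fin n → ZMod (p^e) := fun i => ((w i).val : ZMod (p^e)) with hu_def
    have hru : red p e u = w := by
      funext i
      show ZMod.castHom _ _ ((w i).val : ZMod (p^e)) = w i
      rw [map_natCast]
      exact ZMod.natCast_rightInverse (w i)
    have hu : Primitive u := prim_lift hp he hru hw
    exact ⟨Quotient.mk _ ⟨u, hu⟩, congrArg _ (Subtype.ext hru)⟩
  · -- fiber count
    intro W
    obtain ⟨⟨w, hw⟩, rfl⟩ := W.exists_rep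
    obtain ⟨i0, hi0⟩ := exists_isUnit_of_prim hp (by omega) hw
    set G := (ZMod.unitsMap hdvd).ker with hG_def
    set β := {u : Fin n → ZMod (p^e) // red p e u = w} with hβ_def
    have hsc : ∀ (g : G) (u : β), red p e (fun i => ((g : (ZMod (p^e))ˣ) : ZMod (p^e)) * u.1 i) = w := by
      rintro g u
      funext i
      show ZMod.castHom _ _ (_ * u.1 i) = w i
      rw [map_mul]
      have hg : ZMod.castHom hdvd (ZMod (p^(e-1))) ((g : (ZMod (p^e))ˣ) : ZMod (p^e)) = 1 := by
        have := g.2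
        rw [MonoidHom.mem_ker] at this
        have : ((ZMod.unitsMap hdvd (g : (ZMod (p^e))ˣ)) : ZMod (p^(e-1))) = 1 := by
          rw [this]; rfl
        simpa [ZMod.unitsMap] using this
      rw [hg, one_mul]
      exact congrFun u.2 i
    letI : SMul G β := ⟨fun g u => ⟨fun i => ((g : (ZMod (p^e))ˣ) : ZMod (p^e)) * u.1 i, hsc g u⟩⟩
    letI : MulAction G β := {
      one_smul := fun b => Subtype.ext (funext fun i => one_mul (b.1 i))
      mul_smul := fun g h b => Subtype.ext (funext fun i => mul_assoc _ _ (b.1 i)) }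
    have hprimβ : ∀ b : β, Primitive b.1 := fun b => prim_lift hp he b.2 hw
    have hfree : ∀ (g : G) (b : β), g • b = b → g = 1 := by
      intro g b hgb
      obtain ⟨lam, hlam⟩ := exists_isUnit_of_prim hp (by omega) (hprimβ b)
      have h1 : ((g : (ZMod (p^e))ˣ) : ZMod (p^e)) * b.1 lam = b.1 lam := by
        have := congrArg Subtype.val hgb
        exact congrFun this lam
      have h2 : ((g : (ZMod (p^e))ˣ) : ZMod (p^e)) = 1 :=
        hlam.mul_right_cancel (by rw [one_mul]; exact h1)
      exact Subtype.ext (Units.ext h2)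
    -- the bijection between the fiber and the orbit space
    have hδmk : ∀ (x : {u : Fin n → ZMod (p^e) // Primitive u}),
        δ (Quotient.mk (projSetoid (p^e) n) x)
          = Quotient.mk (projSetoid (p^(e-1)) n) ⟨red p e x.1, prim_red hp he x.2⟩ := fun _ => rfl
    let f0 : β → {U : ProjPt (p^e) n // δ U = Quotient.mk (projSetoid (p^(e-1)) n) ⟨w, hw⟩} :=
      fun b => ⟨Quotient.mk (projSetoid (p^e) n) ⟨b.1, hprimβ b⟩, by
        rw [hδmk]
        exact congrArg _ (Subtype.ext b.2)⟩
    have hcompat : ∀ a b : β, (MulAction.orbitRel G β).r a b → f0 a = f0 b := by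
      intro a b hab
      obtain ⟨g, hg⟩ := hab
      apply Subtype.ext
      apply Quotient.sound
      refine ⟨(((g⁻¹ : G) : (ZMod (p^e))ˣ)), ?_⟩
      funext i
      show b.1 i = _
      have : a.1 i = ((g : (ZMod (p^e))ˣ) : ZMod (p^e)) * b.1 i := by
        rw [← hg]; rfl
      rw [this, ← mul_assoc]
      simp
    let Φ : MulAction.orbitRel.Quotient G β →
        {U : ProjPt (p^e) n // δ U = Quotient.mk (projSetoid (p^(e-1)) n) ⟨w, hw⟩} :=
      Quotient.lift f0 hcompat
    have hΦbij : Function.Bijective Φ := by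
      constructor
      · intro x y
        refine Quotient.inductionOn₂ x y ?_
        intro a b hxy
        have h1 : Quotient.mk (projSetoid (p^e) n) ⟨a.1, hprimβ a⟩
            = Quotient.mk (projSetoid (p^e) n) ⟨b.1, hprimβ b⟩ := congrArg Subtype.val hxy
        obtain ⟨lam, hlam⟩ := Quotient.exact h1
        -- hlam : b.1 = fun i => lam * a.1 i
        have hker : lam ∈ G := by
          rw [hG_def, MonoidHom.mem_ker]
          have hbw := congrFun b.2 i0
          have haw := congrFun a.2 i0
          have hstep : red p e b.1 i0
              = ZMod.castHom hdvd (ZMod (p^(e-1))) (lam : ZMod (p^e)) * red p e a.1 i0 := by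
            rw [hlam]
            show ZMod.castHom _ _ ((lam : ZMod (p^e)) * a.1 i0) = _
            rw [map_mul]; rfl
          have : w i0 = ZMod.castHom hdvd (ZMod (p^(e-1))) (lam : ZMod (p^e)) * w i0 := by
            conv_lhs => rw [← hbw]
            rw [hstep, haw]
          have hcast : ZMod.castHom hdvd (ZMod (p^(e-1))) (lam : ZMod (p^e)) = 1 :=
            hi0.mul_right_cancel (by rw [one_mul]; exact this.symm)
          apply Units.ext
          simpa [ZMod.unitsMap] using hcast
        apply Quotient.sound
        refine ⟨(⟨lam, hker⟩ : G)⁻¹, ?_⟩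
        apply Subtype.ext
        funext i
        show (((⟨lam, hker⟩ : G)⁻¹ : (ZMod (p^e))ˣ) : ZMod (p^e)) * b.1 i = a.1 i
        rw [hlam]
        show ((lam⁻¹ : (ZMod (p^e))ˣ) : ZMod (p^e)) * ((lam : ZMod (p^e)) * a.1 i) = a.1 i
        rw [← mul_assoc]
        simp
      · rintro ⟨U, hU⟩
        obtain ⟨x, rfl⟩ := U.exists_rep
        have hU' : Quotient.mk (projSetoid (p^(e-1)) n) ⟨red p e x.1, prim_red hp he x.2⟩
            = Quotient.mk (projSetoid (p^(e-1)) n) ⟨w, hw⟩ := (hδmk x).symm.trans hU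
        obtain ⟨lam', hl⟩ := Quotient.exact hU'
        -- hl : w = fun i => lam' * red x.1 i
        obtain ⟨lam, hlam⟩ := ZMod.unitsMap_surjective hdvd lam'
        have hbu : red p e (fun i => ((lam : ZMod (p^e)) * x.1 i)) = w := by
          funext i
          show ZMod.castHom _ _ ((lam : ZMod (p^e)) * x.1 i) = w i
          rw [map_mul]
          have : ZMod.castHom hdvd (ZMod (p^(e-1))) (lam : ZMod (p^e))
              = ((lam' : (ZMod (p^(e-1)))ˣ) : ZMod (p^(e-1))) := by
            rw [← hlam]; rfl
          rw [this]
          exact (congrFun hl i).symm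
        refine ⟨Quotient.mk _ (⟨fun i => (lam : ZMod (p^e)) * x.1 i, hbu⟩ : β), ?_⟩
        apply Subtype.ext
        show Quotient.mk (projSetoid (p^e) n) _ = Quotient.mk (projSetoid (p^e) n) x
        apply Quotient.sound
        refine ⟨lam⁻¹, ?_⟩
        funext i
        show x.1 i = ((lam⁻¹ : (ZMod (p^e))ˣ) : ZMod (p^e)) * ((lam : ZMod (p^e)) * x.1 i)
        rw [← mul_assoc]
        simp
    -- cardinality computations
    have hcardβ : Nat.card β = p^n := by
      set f : ZMod (p^e) →+ ZMod (p^(e-1)) :=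
        (ZMod.castHom hdvd (ZMod (p^(e-1)))).toAddMonoidHom with hf_def
      have hfsurj : Function.Surjective f := by
        intro y
        refine ⟨(y.val : ZMod (p^e)), ?_⟩
        show ZMod.castHom hdvd (ZMod (p^(e-1))) _ = y
        rw [map_natCast]
        exact ZMod.natCast_rightInverse y
      have hfib : ∀ c : ZMod (p^(e-1)), Nat.card {x : ZMod (p^e) // f x = c} = p := by
        intro c
        have := card_fiber_addhom f hfsurj c
        rw [Nat.card_zmod, Nat.card_zmod] at this
        have hpe : p^e = p^(e-1) * p := by
          rw [← pow_succ]
          congr 1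
          omega
        exact Nat.eq_of_mul_eq_mul_left (pow_pos hp.pos (e-1)) (this.trans hpe)
      have e1 : β ≃ {u : Fin n → ZMod (p^e) // ∀ i, f (u i) = w i} :=
        Equiv.subtypeEquivRight (fun u => funext_iff)
      have e2 : {u : Fin n → ZMod (p^e) // ∀ i, f (u i) = w i} ≃ ∀ i, {x : ZMod (p^e) // f x = w i} :=
        Equiv.subtypePiEquivPi (p := fun i x => f x = w i)
      rw [Nat.card_congr (e1.trans e2), Nat.card_pi,
        Finset.prod_congr rfl fun i _ => hfib (w i), Finset.prod_const]
      simp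
    have hcardG : Nat.card G = p := by
      have h1 := Subgroup.card_eq_card_quotient_mul_card_subgroup G
      rw [Nat.card_congr (QuotientGroup.quotientKerEquivOfSurjective _
        (ZMod.unitsMap_surjective hdvd)).toEquiv] at h1
      have h2 : Nat.card (ZMod (p^e))ˣ = p^(e-1) * (p-1) := by
        rw [Nat.card_eq_fintype_card, ZMod.card_units_eq_totient,
          Nat.totient_prime_pow hp (by omega)]
      have h3 : Nat.card (ZMod (p^(e-1)))ˣ = p^(e-2) * (p-1) := by
        rw [Nat.card_eq_fintype_card, ZMod.card_units_eq_totient,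
          Nat.totient_prime_pow hp (by omega)]
        congr 2
      rw [h2, h3] at h1
      have hp1 : p^(e-1) = p^(e-2) * p := by
        rw [← pow_succ]
        congr 1
        omega
      rw [hp1] at h1
      have hpos : 0 < p^(e-2) * (p-1) := by
        have := hp.two_le
        exact Nat.mul_pos (pow_pos hp.pos _) (by omega)
      -- h1 : p^(e-2) * p * (p-1) = p^(e-2) * (p-1) * Nat.card G
      have h1' : (p^(e-2) * (p-1)) * p = (p^(e-2) * (p-1)) * Nat.card G := by
        rw [← h1]; ring
      exact (Nat.eq_of_mul_eq_mul_left hpos h1').symm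
    have hmain := card_free_quotient hfree
    rw [hcardβ, hcardG] at hmain
    rw [← Nat.card_congr (Equiv.ofBijective Φ hΦbij)]
    have hfin : p^n = p^(n-1) * p := by
      rw [← pow_succ]
      congr 1
      omega
    rw [hfin] at hmain
    exact Nat.eq_of_mul_eq_mul_right hp.pos (by omega)
end

section
/- Let p be a prime, e,n ≥ 2, and let u,v be primitive vectors in (Z/p^e)^n representing distinct points of P_{n,p^e}. Let ξ = gcd of all ξ_{ij} = u_i v_j - u_j v_i (as integers via representatives) together with p^e. Then for every g ∈ {0,1,...,e}, the number of solutions w of the system ⟨u,w⟩ ≡ 0 and ⟨v,w⟩ ≡ 0 (mod p^e) with w ∈ p^g·(Z/p^e)^n (i.e., all coordinates divisible by p^g) is exactly p^{β + (e-g)(n-2)}, where β = min(ν_p(ξ), e-g). -/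
open scoped Classical

namespace Stmt7Aux

variable {p : ℕ}

lemma natCast_val_self {m : ℕ} [NeZero m] (z : ZMod m) : ((z.val : ℕ) : ZMod m) = z :=
  ZMod.natCast_rightInverse z

lemma pow_dvd_iff_val (hp : p.Prime) {f k : ℕ} (hk : k ≤ f) (x : ZMod (p^f)) :
    (p : ZMod (p^f))^k ∣ x ↔ p^k ∣ x.val := by
  haveI : NeZero (p^f) := ⟨pow_ne_zero f hp.ne_zero⟩
  constructor
  · rintro ⟨y, rfl⟩
    have h1 : (p:ZMod (p^f))^k * y = ((p^k * y.val : ℕ) : ZMod (p^f)) := by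
      rw [Nat.cast_mul, Nat.cast_pow, natCast_val_self]
    rw [h1, ZMod.val_natCast]
    exact (Nat.dvd_mod_iff (pow_dvd_pow p hk)).mpr ⟨y.val, rfl⟩
  · rintro ⟨c, hc⟩
    have hx : x = ((p^k * c : ℕ) : ZMod (p^f)) := by rw [← hc, natCast_val_self]
    rw [hx]
    exact ⟨(c : ZMod (p^f)), by push_cast; ring⟩

lemma card_dvd_set (hp : p.Prime) {f k : ℕ} (hk : k ≤ f) :
    Nat.card {x : ZMod (p^f) // (p : ZMod (p^f))^k ∣ x} = p^(f-k) := by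
  haveI : NeZero (p^f) := ⟨pow_ne_zero f hp.ne_zero⟩
  haveI : NeZero (p^(f-k)) := ⟨pow_ne_zero _ hp.ne_zero⟩
  have hval : ∀ y : ZMod (p^(f-k)), ((p^k * y.val : ℕ) : ZMod (p^f)).val = p^k * y.val := by
    intro y
    rw [ZMod.val_natCast, Nat.mod_eq_of_lt]
    calc p^k * y.val < p^k * p^(f-k) :=
          (Nat.mul_lt_mul_left (pow_pos hp.pos k)).mpr (ZMod.val_lt y)
    _ = p^f := by rw [← pow_add, Nat.add_sub_cancel' hk]
  have key : Function.Bijective (fun y : ZMod (p^(f-k)) =>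
      (⟨((p^k * y.val : ℕ) : ZMod (p^f)), ⟨(y.val : ZMod (p^f)), by push_cast; ring⟩⟩ :
        {x : ZMod (p^f) // (p : ZMod (p^f))^k ∣ x})) := by
    constructor
    · intro y1 y2 h
      have h2 : p^k * y1.val = p^k * y2.val := by
        have h3 : ((p^k * y1.val : ℕ) : ZMod (p^f)).val = ((p^k * y2.val : ℕ) : ZMod (p^f)).val :=
          congrArg (fun z : {x : ZMod (p^f) // (p : ZMod (p^f))^k ∣ x} => z.1.val) h
        rwa [hval y1, hval y2] at h3
      exact ZMod.val_injective _ (Nat.eq_of_mul_eq_mul_left (pow_pos hp.pos k) h2)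
    · rintro ⟨x, hx⟩
      obtain ⟨c, hc⟩ := (pow_dvd_iff_val hp hk x).mp hx
      have hlt : c < p^(f-k) := by
        by_contra hcon
        push_neg at hcon
        have hle : p^f ≤ x.val := by
          rw [hc, ← Nat.add_sub_cancel' hk, pow_add]
          exact Nat.mul_le_mul_left _ hcon
        exact absurd (ZMod.val_lt x) (not_lt.mpr hle)
      refine ⟨(c : ZMod (p^(f-k))), ?_⟩
      apply Subtype.ext
      show ((p^k * ((c : ZMod (p^(f-k)))).val : ℕ) : ZMod (p^f)) = x
      rw [ZMod.val_cast_of_lt hlt, ← hc, natCast_val_self]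
  rw [← Nat.card_zmod (p^(f-k))]
  exact (Nat.card_eq_of_bijective _ key).symm

lemma pow_mul_eq_zero_iff (hp : p.Prime) {f s : ℕ} (hs : s ≤ f) (z : ZMod (p^f)) :
    (p : ZMod (p^f))^s * z = 0 ↔ (p : ZMod (p^f))^(f-s) ∣ z := by
  haveI : NeZero (p^f) := ⟨pow_ne_zero f hp.ne_zero⟩
  rw [pow_dvd_iff_val hp (Nat.sub_le f s)]
  have h1 : (p : ZMod (p^f))^s * z = ((p^s * z.val : ℕ) : ZMod (p^f)) := by
    rw [Nat.cast_mul, Nat.cast_pow, natCast_val_self]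
  rw [h1, ZMod.natCast_eq_zero_iff]
  constructor
  · intro h
    have h2 : p^s * p^(f-s) ∣ p^s * z.val := by rwa [← pow_add, Nat.add_sub_cancel' hs]
    exact (Nat.mul_dvd_mul_iff_left (pow_pos hp.pos s)).mp h2
  · rintro ⟨q, hq⟩
    exact ⟨q, by rw [hq, ← mul_assoc, ← pow_add, Nat.add_sub_cancel' hs]⟩

lemma card_shift (hp : p.Prime) {f k : ℕ} (hk : k ≤ f) (a : ZMod (p^f)) :
    Nat.card {x : ZMod (p^f) // (p : ZMod (p^f))^k ∣ x - a} = p^(f-k) := by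
  rw [← card_dvd_set hp hk]
  apply Nat.card_congr
  exact { toFun := fun x => ⟨x.1 - a, x.2⟩
          invFun := fun x => ⟨x.1 + a, by simpa using x.2⟩
          left_inv := fun x => by apply Subtype.ext; simp
          right_inv := fun x => by apply Subtype.ext; simp }

lemma card_unit_pow_eq (hp : p.Prime) {f s : ℕ} (hs : s ≤ f) (ε : (ZMod (p^f))ˣ)
    {b : ZMod (p^f)} (hb : (p : ZMod (p^f))^s ∣ b) :
    Nat.card {x : ZMod (p^f) // (↑ε * (p : ZMod (p^f))^s) * x = b} = p^s := by
  obtain ⟨d, hd⟩ := hb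
  have key : ∀ x : ZMod (p^f),
      ((↑ε * (p:ZMod (p^f))^s) * x = b) ↔ ((p:ZMod (p^f))^(f-s) ∣ x - ↑ε⁻¹ * d) := by
    intro x
    rw [← sub_eq_zero]
    have h1 : (↑ε * (p:ZMod (p^f))^s) * x - b
        = (p:ZMod (p^f))^s * (↑ε * (x - ↑ε⁻¹ * d)) := by
      rw [hd]
      linear_combination ((p:ZMod (p^f))^s * d) * ε.mul_inv
    rw [h1, pow_mul_eq_zero_iff hp hs]
    exact Units.dvd_mul_left
  rw [Nat.card_congr (Equiv.subtypeEquivRight key), card_shift hp (Nat.sub_le f s),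
    Nat.sub_sub_self hs]

lemma exists_unit_factor (hp : p.Prime) {f s : ℕ} (hs : s + 1 ≤ f) {c : ZMod (p^f)}
    (h1 : (p:ZMod (p^f))^s ∣ c) (h2 : ¬ (p:ZMod (p^f))^(s+1) ∣ c) :
    ∃ ε : (ZMod (p^f))ˣ, c = ↑ε * (p:ZMod (p^f))^s := by
  haveI : NeZero (p^f) := ⟨pow_ne_zero f hp.ne_zero⟩
  rw [pow_dvd_iff_val hp (by omega : s ≤ f)] at h1
  rw [pow_dvd_iff_val hp hs] at h2
  obtain ⟨m, hm⟩ := h1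
  have hpm : ¬ p ∣ m := by
    rintro ⟨q, hq⟩
    exact h2 ⟨q, by rw [hm, hq]; ring⟩
  have hunit : IsUnit ((m : ℕ) : ZMod (p^f)) := by
    rw [ZMod.isUnit_iff_coprime]
    exact ((hp.coprime_iff_not_dvd.mpr hpm)).symm.pow_right f
  refine ⟨hunit.unit, ?_⟩
  rw [IsUnit.unit_spec]
  calc c = ((c.val : ℕ) : ZMod (p^f)) := (natCast_val_self c).symm
  _ = ((p^s * m : ℕ) : ZMod (p^f)) := by rw [hm]
  _ = (m : ZMod (p^f)) * (p : ZMod (p^f))^s := by push_cast; ring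

lemma card_linear (hp : p.Prime) {f s : ℕ} (hs : s ≤ f) {ι : Type} [Fintype ι]
    (c : ι → ZMod (p^f)) (j : ι) (ε : (ZMod (p^f))ˣ)
    (hj : c j = ↑ε * (p:ZMod (p^f))^s)
    (hall : ∀ i, (p:ZMod (p^f))^s ∣ c i) :
    Nat.card {y : ι → ZMod (p^f) // ∑ i, c i * y i = 0}
      = p^(s + f * (Fintype.card ι - 1)) := by
  classical
  haveI : NeZero (p^f) := ⟨pow_ne_zero f hp.ne_zero⟩
  have hbdvd0 : ∀ z : {i : ι // i ≠ j} → ZMod (p^f),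
      (p:ZMod (p^f))^s ∣ - ∑ i : {i : ι // i ≠ j}, c i.1 * z i :=
    fun z => (Finset.dvd_sum (fun i _ => (hall i.1).mul_right _)).neg_right
  set b : ({i : ι // i ≠ j} → ZMod (p^f)) → ZMod (p^f) :=
    fun z => - ∑ i : {i : ι // i ≠ j}, c i.1 * z i with hbdef
  have hbdvd : ∀ z, (p:ZMod (p^f))^s ∣ b z := hbdvd0
  set dsel : ({i : ι // i ≠ j} → ZMod (p^f)) → ZMod (p^f) :=
    fun z => Classical.choose (hbdvd z) with hdsel
  have hd : ∀ z, b z = (p:ZMod (p^f))^s * dsel z := fun z => Classical.choose_spec (hbdvd z)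
  have hsplit : ∀ y : ι → ZMod (p^f), ∑ i, c i * y i
      = c j * y j + ∑ i : {i : ι // i ≠ j}, c i.1 * y i.1 := by
    intro y
    rw [← Finset.add_sum_erase Finset.univ (fun i => c i * y i) (Finset.mem_univ j)]
    congr 1
    exact Finset.sum_subtype _ (by simp) _
  have hcond : ∀ y : ι → ZMod (p^f), (∑ i, c i * y i = 0) ↔ c j * y j = b (fun i => y i.1) := by
    intro y
    rw [hsplit y, add_eq_zero_iff_eq_neg]
  have keyiff : ∀ (x : ZMod (p^f)) (z : {i : ι // i ≠ j} → ZMod (p^f)),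
      (c j * x = b z) ↔ (p:ZMod (p^f))^(f-s) ∣ x - ↑ε⁻¹ * dsel z := by
    intro x z
    rw [hj, ← sub_eq_zero]
    have h1 : (↑ε * (p:ZMod (p^f))^s) * x - b z
        = (p:ZMod (p^f))^s * (↑ε * (x - ↑ε⁻¹ * dsel z)) := by
      rw [hd z]
      linear_combination ((p:ZMod (p^f))^s * dsel z) * ε.mul_inv
    rw [h1, pow_mul_eq_zero_iff hp hs]
    exact Units.dvd_mul_left
  have E : {y : ι → ZMod (p^f) // ∑ i, c i * y i = 0}
      ≃ (({i : ι // i ≠ j} → ZMod (p^f)) × {x : ZMod (p^f) // (p:ZMod (p^f))^(f-s) ∣ x}) := by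
    refine
      { toFun := fun y => ⟨fun i => y.1 i.1, ⟨y.1 j - ↑ε⁻¹ * dsel (fun i => y.1 i.1),
          (keyiff _ _).mp ((hcond y.1).mp y.2)⟩⟩
        invFun := fun zx => ⟨fun i => if h : i = j then zx.2.1 + ↑ε⁻¹ * dsel zx.1 else zx.1 ⟨i, h⟩, ?_⟩
        left_inv := ?_
        right_inv := ?_ }
    · rcases zx with ⟨z, x, hx⟩
      have hres : (fun i : {i : ι // i ≠ j} =>
          (fun i => if h : i = j then x + ↑ε⁻¹ * dsel z else z ⟨i, h⟩) i.1) = z := by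
        funext i
        simp [dif_neg i.2]
      rw [hcond]
      rw [hres]
      have hcj : (if h : j = j then x + ↑ε⁻¹ * dsel z else z ⟨j, h⟩) = x + ↑ε⁻¹ * dsel z :=
        dif_pos rfl
      rw [hcj, keyiff]
      simpa using hx
    · rintro ⟨y, hy⟩
      apply Subtype.ext
      funext i
      by_cases h : i = j
      · subst h
        simp
      · simp [dif_neg h]
    · rintro ⟨z, x, hx⟩
      have hres : (fun i : {i : ι // i ≠ j} =>
          (fun i => if h : i = j then x + ↑ε⁻¹ * dsel z else z ⟨i, h⟩) i.1) = z := by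
        funext i
        simp [dif_neg i.2]
      refine Prod.ext ?_ ?_
      · exact hres
      · apply Subtype.ext
        show (if h : j = j then x + ↑ε⁻¹ * dsel z else z ⟨j, h⟩)
            - ↑ε⁻¹ * dsel (fun i : {i : ι // i ≠ j} =>
              (fun i => if h : i = j then x + ↑ε⁻¹ * dsel z else z ⟨i, h⟩) i.1) = x
        rw [hres, dif_pos rfl]
        ring
  rw [Nat.card_congr E, Nat.card_prod, Nat.card_fun, Nat.card_zmod,
    card_dvd_set hp (Nat.sub_le f s), Nat.sub_sub_self hs]
  have hcard : Nat.card {i : ι // i ≠ j} = Fintype.card ι - 1 := by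
    rw [Nat.card_eq_fintype_card]
    simp [Fintype.card_subtype_compl]
  rw [hcard, ← pow_mul, ← pow_add]
  ring_nf


lemma card_pair {R : Type} [CommRing R] {n : ℕ} (u v : Fin n → R) (i0 : Fin n)
    (hu : IsUnit (u i0)) :
    Nat.card {w : Fin n → R // ∑ i, u i * w i = 0 ∧ ∑ i, v i * w i = 0}
      = Nat.card {y : {i : Fin n // i ≠ i0} → R //
          ∑ i, (u i0 * v i.1 - u i.1 * v i0) * y i = 0} := by
  classical
  have hsplit : ∀ F : Fin n → R, ∑ i, F i = F i0 + ∑ i : {i : Fin n // i ≠ i0}, F i.1 := by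
    intro F
    rw [← Finset.add_sum_erase Finset.univ F (Finset.mem_univ i0)]
    congr 1
    exact Finset.sum_subtype _ (by simp) _
  have hid : ∀ x : Fin n → R,
      ∑ i : {i : Fin n // i ≠ i0}, (u i0 * v i.1 - u i.1 * v i0) * x i.1
        = u i0 * ∑ i, v i * x i - v i0 * ∑ i, u i * x i := by
    intro x
    have h2 : ∑ i, (u i0 * v i - u i * v i0) * x i
        = u i0 * ∑ i, v i * x i - v i0 * ∑ i, u i * x i := by
      rw [Finset.mul_sum, Finset.mul_sum, ← Finset.sum_sub_distrib]
      exact Finset.sum_congr rfl fun i _ => by ring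
    rw [← h2, hsplit (fun i => (u i0 * v i - u i * v i0) * x i)]
    simp
  have hinv : (↑hu.unit⁻¹ : R) * u i0 = 1 := hu.val_inv_mul
  set glue : ({i : Fin n // i ≠ i0} → R) → Fin n → R := fun y i =>
    if h : i = i0 then
      -(↑hu.unit⁻¹ : R) * (∑ k : {i : Fin n // i ≠ i0}, u k.1 * y k)
    else y ⟨i, h⟩ with hglue
  have hg1 : ∀ (y : {i : Fin n // i ≠ i0} → R) (i : {i : Fin n // i ≠ i0}),
      glue y i.1 = y i := by
    intro y i
    exact dif_neg i.2
  have hg2 : ∀ y : {i : Fin n // i ≠ i0} → R,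
      glue y i0 = -(↑hu.unit⁻¹ : R) * (∑ k : {i : Fin n // i ≠ i0}, u k.1 * y k) := by
    intro y
    exact dif_pos rfl
  have hgu : ∀ y : {i : Fin n // i ≠ i0} → R, ∑ i, u i * glue y i = 0 := by
    intro y
    rw [hsplit (fun i => u i * glue y i),
      show (∑ i : {i : Fin n // i ≠ i0}, u i.1 * glue y i.1)
          = ∑ i : {i : Fin n // i ≠ i0}, u i.1 * y i from
        Finset.sum_congr rfl fun i _ => by rw [hg1 y i],
      hg2 y]
    linear_combination (-(∑ k : {i : Fin n // i ≠ i0}, u k.1 * y k)) * hinv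
  have hgv : ∀ (y : {i : Fin n // i ≠ i0} → R),
      (∑ i, (u i0 * v i.1 - u i.1 * v i0) * y i = 0) → ∑ i, v i * glue y i = 0 := by
    intro y hy
    have h3 := hid (glue y)
    rw [show (∑ i : {i : Fin n // i ≠ i0}, (u i0 * v i.1 - u i.1 * v i0) * glue y i.1)
          = ∑ i : {i : Fin n // i ≠ i0}, (u i0 * v i.1 - u i.1 * v i0) * y i from
        Finset.sum_congr rfl fun i _ => by rw [hg1 y i],
      hy, hgu y, mul_zero, sub_zero] at h3
    exact hu.mul_right_eq_zero.mp h3.symm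
  refine Nat.card_congr
    { toFun := fun w => ⟨fun i => w.1 i.1, ?_⟩
      invFun := fun y => ⟨glue y.1, hgu y.1, hgv y.1 y.2⟩
      left_inv := ?_
      right_inv := ?_ }
  · have h := hid w.1
    rw [w.2.1, w.2.2, mul_zero, mul_zero, sub_zero] at h
    exact h
  · rintro ⟨w, hw1, hw2⟩
    apply Subtype.ext
    funext i
    show glue (fun k => w k.1) i = w i
    by_cases h : i = i0
    · rw [h]
      rw [hg2 (fun k => w k.1)]
      have h0 := hsplit (fun k => u k * w k)
      rw [hw1] at h0
      have hS : (∑ k : {i' : Fin n // i' ≠ i0}, u k.1 * w k.1) = -(u i0 * w i0) :=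
        eq_neg_of_add_eq_zero_right h0.symm
      rw [hS]
      linear_combination (w i0) * hinv
    · exact dif_neg h
  · rintro ⟨y, hy⟩
    apply Subtype.ext
    funext i
    exact hg1 y i

end Stmt7Aux

theorem stmt7 (p e n : ℕ) (hp : p.Prime) (he : 2 ≤ e) (hn : 2 ≤ n)
    (u v : Fin n → ZMod (p^e)) (hu : Primitive u) (hv : Primitive v)
    (hne : ¬ assoc u v) (g : ℕ) (hg : g ≤ e) :
    Nat.card {w : Fin n → ZMod (p^e) //
        (∀ i, (p : ZMod (p^e))^g ∣ w i) ∧ ∑ i, u i * w i = 0 ∧ ∑ i, v i * w i = 0}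
      = p^(min (nuXi p e u v) (e - g) + (e - g) * (n - 2)) := by
  classical
  haveI : Fact p.Prime := ⟨hp⟩
  haveI : NeZero (p^e) := ⟨pow_ne_zero e hp.ne_zero⟩
  set f := e - g with hf
  haveI : NeZero (p^f) := ⟨pow_ne_zero _ hp.ne_zero⟩
  have hfe : f ≤ e := Nat.sub_le e g
  have hdvd : p^f ∣ p^e := pow_dvd_pow p hfe
  have hgfe : p^g * p^f = p^e := by rw [← pow_add, Nat.add_sub_cancel' hg]
  set ub : Fin n → ZMod (p^f) := fun i => ZMod.castHom hdvd (ZMod (p^f)) (u i) with hub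
  set vb : Fin n → ZMod (p^f) := fun i => ZMod.castHom hdvd (ZMod (p^f)) (v i) with hvb
  -- the shrinking map
  set ψ : ZMod (p^f) → ZMod (p^e) :=
    fun x => (p : ZMod (p^e))^g * ((x.val : ℕ) : ZMod (p^e)) with hψ
  have hG : ∀ A : ZMod (p^e),
      ((p:ZMod (p^e))^g * A = 0 ↔ ZMod.castHom hdvd (ZMod (p^f)) A = 0) := by
    intro A
    have h1 : (p:ZMod (p^e))^g * A = ((p^g * A.val : ℕ) : ZMod (p^e)) := by
      rw [Nat.cast_mul, Nat.cast_pow, Stmt7Aux.natCast_val_self]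
    have h2 : ZMod.castHom hdvd (ZMod (p^f)) A = ((A.val : ℕ) : ZMod (p^f)) := by
      rw [ZMod.castHom_apply, ← ZMod.natCast_val]
    rw [h1, h2, ZMod.natCast_eq_zero_iff, ZMod.natCast_eq_zero_iff]
    constructor
    · intro h
      have h' : p^g * p^f ∣ p^g * A.val := by rw [hgfe]; exact h
      exact (Nat.mul_dvd_mul_iff_left (pow_pos hp.pos g)).mp h'
    · intro h
      have h' := Nat.mul_dvd_mul_left (p^g) h
      rwa [hgfe] at h'
  have hψcast : ∀ c : ZMod (p^e),
      ψ (ZMod.castHom hdvd (ZMod (p^f)) c) = (p:ZMod (p^e))^g * c := by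
    intro c
    have h2 : (ZMod.castHom hdvd (ZMod (p^f)) c).val = c.val % p^f := by
      rw [ZMod.castHom_apply, ← ZMod.natCast_val, ZMod.val_natCast]
    show (p : ZMod (p^e))^g * (((ZMod.castHom hdvd (ZMod (p^f)) c).val : ℕ) : ZMod (p^e)) = _
    rw [h2]
    have h4 : ((p^f * (c.val / p^f) + c.val % p^f : ℕ) : ZMod (p^e)) = c := by
      rw [Nat.div_add_mod]
      exact Stmt7Aux.natCast_val_self c
    push_cast at h4
    have h5 : (p:ZMod (p^e))^g * (p:ZMod (p^e))^f = 0 := by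
      rw [← pow_add, Nat.add_sub_cancel' hg, ← Nat.cast_pow, ZMod.natCast_self]
    linear_combination (p:ZMod (p^e))^g * h4 - ((c.val / p^f : ℕ) : ZMod (p^e)) * h5
  have hψinj : Function.Injective ψ := by
    intro x y h
    have h1 : ((p^g * x.val : ℕ) : ZMod (p^e)) = ((p^g * y.val : ℕ) : ZMod (p^e)) := by
      push_cast
      exact h
    rw [ZMod.natCast_eq_natCast_iff, ← hgfe] at h1
    have h2 := Nat.ModEq.mul_left_cancel' (pow_ne_zero g hp.ne_zero) h1
    exact ZMod.val_injective _ (h2.eq_of_lt_of_lt (ZMod.val_lt x) (ZMod.val_lt y))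
  have hsum : ∀ (a : Fin n → ZMod (p^e)) (w' : Fin n → ZMod (p^f)),
      ∑ i, a i * ψ (w' i)
        = (p:ZMod (p^e))^g * ∑ i, a i * (((w' i).val : ℕ) : ZMod (p^e)) := by
    intro a w'
    rw [Finset.mul_sum]
    refine Finset.sum_congr rfl fun i _ => ?_
    show a i * ((p : ZMod (p^e))^g * _) = _
    ring
  have hiff : ∀ (a : Fin n → ZMod (p^e)) (w' : Fin n → ZMod (p^f)),
      ((∑ i, a i * ψ (w' i)) = 0
        ↔ ∑ i, ZMod.castHom hdvd (ZMod (p^f)) (a i) * w' i = 0) := by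
    intro a w'
    rw [hsum a w', hG]
    have hA : ZMod.castHom hdvd (ZMod (p^f)) (∑ i, a i * (((w' i).val : ℕ) : ZMod (p^e)))
        = ∑ i, ZMod.castHom hdvd (ZMod (p^f)) (a i) * w' i := by
      rw [map_sum]
      refine Finset.sum_congr rfl fun i _ => ?_
      rw [map_mul, map_natCast]
      congr 1
      exact ZMod.natCast_rightInverse _
    rw [hA]
  -- unit coordinate of u
  obtain ⟨i0, hi0⟩ : ∃ i, ¬ p ∣ (u i).val := by
    by_contra hcon
    push_neg at hcon
    have h1 : p ∣ Finset.univ.gcd fun i => (u i).val :=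
      Finset.dvd_gcd fun i _ => hcon i
    have h2 : p ∣ Nat.gcd (Finset.univ.gcd fun i => (u i).val) (p^e) :=
      Nat.dvd_gcd h1 (dvd_pow_self p (by omega))
    rw [hu] at h2
    have := Nat.le_of_dvd one_pos h2
    have := hp.two_le
    omega
  have hu0 : IsUnit (ub i0) := by
    have h1 : ub i0 = (((u i0).val : ℕ) : ZMod (p^f)) := by
      show ZMod.castHom hdvd (ZMod (p^f)) (u i0) = _
      rw [ZMod.castHom_apply, ← ZMod.natCast_val]
    rw [h1, ZMod.isUnit_iff_coprime]
    exact ((hp.coprime_iff_not_dvd.mpr hi0)).symm.pow_right f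
  -- valuation facts
  set t := nuXi p e u v with ht
  set s := min t f with hs'
  have hsf : s ≤ f := min_le_right _ _
  have hmem : t ∈ {k | ∃ i j : Fin n, k = nuVal p e (u i * v j - u j * v i)} := by
    rw [ht, nuXi]
    exact Nat.sInf_mem ⟨_, ⟨⟨0, by omega⟩, ⟨0, by omega⟩, rfl⟩⟩
  have hle : ∀ i j : Fin n, t ≤ nuVal p e (u i * v j - u j * v i) := by
    intro i j
    rw [ht, nuXi]
    exact Nat.sInf_le ⟨i, j, rfl⟩
  have hdvd_e : ∀ i j : Fin n, (p:ZMod (p^e))^s ∣ (u i * v j - u j * v i) := by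
    intro i j
    by_cases hx : u i * v j - u j * v i = 0
    · rw [hx]; exact dvd_zero _
    · have h1 := hle i j
      simp only [nuVal, if_neg hx] at h1
      rw [Stmt7Aux.pow_dvd_iff_val hp (le_trans hsf hfe)]
      exact dvd_trans (pow_dvd_pow p (le_trans (min_le_left t f) h1)) pow_padicValNat_dvd
  have hdvd_f : ∀ i j : Fin n, (p:ZMod (p^f))^s ∣ (ub i * vb j - ub j * vb i) := by
    intro i j
    have h2 := map_dvd (ZMod.castHom hdvd (ZMod (p^f))) (hdvd_e i j)
    rwa [map_sub, map_mul, map_mul, map_pow, map_natCast] at h2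
  -- find an exact-valuation coefficient
  have hex : ∃ (j : {i : Fin n // i ≠ i0}) (ε : (ZMod (p^f))ˣ),
      (ub i0 * vb j.1 - ub j.1 * vb i0) = ↑ε * (p:ZMod (p^f))^s := by
    rcases eq_or_lt_of_le hsf with heq | hlt
    · haveI : Nontrivial (Fin n) := ⟨⟨⟨0, by omega⟩, ⟨1, by omega⟩, by simp [Fin.ext_iff]⟩⟩
      obtain ⟨j', hj'⟩ := exists_ne i0
      have hz : (p:ZMod (p^f))^s = 0 := by
        rw [heq, ← Nat.cast_pow, ZMod.natCast_self]
      have hdd := hdvd_f i0 j'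
      rw [hz] at hdd
      have hc0 : ub i0 * vb j' - ub j' * vb i0 = 0 := zero_dvd_iff.mp hdd
      exact ⟨⟨j', hj'⟩, 1, by rw [hc0, hz]; simp⟩
    · have hts : s = t := by
        rcases le_total t f with h' | h'
        · rw [hs', min_eq_left h']
        · exfalso
          rw [hs', min_eq_right h'] at hlt
          exact lt_irrefl f hlt
      obtain ⟨a, b, hab⟩ := hmem
      have hxne : u a * v b - u b * v a ≠ 0 := by
        intro h0
        rw [h0] at hab
        simp only [nuVal, eq_self_iff_true, if_true] at hab
        omega
      simp only [nuVal, if_neg hxne] at hab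
      have hnd_e : ¬ (p:ZMod (p^e))^(s+1) ∣ (u a * v b - u b * v a) := by
        rw [Stmt7Aux.pow_dvd_iff_val hp (by omega : s+1 ≤ e), hts, hab]
        exact pow_succ_padicValNat_not_dvd ((ZMod.val_ne_zero _).mpr hxne)
      have hnd_f : ¬ (p:ZMod (p^f))^(s+1) ∣ (ub a * vb b - ub b * vb a) := by
        intro hdd
        apply hnd_e
        rw [Stmt7Aux.pow_dvd_iff_val hp (by omega : s+1 ≤ e)]
        rw [Stmt7Aux.pow_dvd_iff_val hp (by omega : s+1 ≤ f)] at hdd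
        have hvv : ub a * vb b - ub b * vb a
            = ZMod.castHom hdvd (ZMod (p^f)) (u a * v b - u b * v a) := by
          rw [map_sub, map_mul, map_mul]
        rw [hvv] at hdd
        have hval2 : (ZMod.castHom hdvd (ZMod (p^f)) (u a * v b - u b * v a)).val
            = (u a * v b - u b * v a).val % p^f := by
          rw [ZMod.castHom_apply, ← ZMod.natCast_val, ZMod.val_natCast]
        rw [hval2] at hdd
        exact (Nat.dvd_mod_iff (pow_dvd_pow p (by omega : s+1 ≤ f))).mp hdd
      have hcases : ¬ (p:ZMod (p^f))^(s+1) ∣ (ub i0 * vb b - ub b * vb i0) ∨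
          ¬ (p:ZMod (p^f))^(s+1) ∣ (ub i0 * vb a - ub a * vb i0) := by
        by_contra hcon
        push_neg at hcon
        apply hnd_f
        have hd2 : (p:ZMod (p^f))^(s+1) ∣ ub i0 * (ub a * vb b - ub b * vb a) := by
          rw [show ub i0 * (ub a * vb b - ub b * vb a)
              = ub a * (ub i0 * vb b - ub b * vb i0)
                - ub b * (ub i0 * vb a - ub a * vb i0) from by ring]
          exact dvd_sub (hcon.1.mul_left _) (hcon.2.mul_left _)
        have h3 := hd2.mul_left (↑hu0.unit⁻¹ : ZMod (p^f))
        rwa [← mul_assoc, hu0.val_inv_mul, one_mul] at h3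
      rcases hcases with h | h
      · have hb_ne : b ≠ i0 := fun hbi => h (by rw [hbi, sub_self]; exact dvd_zero _)
        obtain ⟨ε, hε⟩ := Stmt7Aux.exists_unit_factor hp (by omega : s+1 ≤ f) (hdvd_f i0 b) h
        exact ⟨⟨b, hb_ne⟩, ε, hε⟩
      · have ha_ne : a ≠ i0 := fun hai => h (by rw [hai, sub_self]; exact dvd_zero _)
        obtain ⟨ε, hε⟩ := Stmt7Aux.exists_unit_factor hp (by omega : s+1 ≤ f) (hdvd_f i0 a) h
        exact ⟨⟨a, ha_ne⟩, ε, hε⟩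
  obtain ⟨j, ε, hjε⟩ := hex
  have step0 : Nat.card {w : Fin n → ZMod (p^e) //
        (∀ i, (p : ZMod (p^e))^g ∣ w i) ∧ ∑ i, u i * w i = 0 ∧ ∑ i, v i * w i = 0}
      = Nat.card {w : Fin n → ZMod (p^f) // ∑ i, ub i * w i = 0 ∧ ∑ i, vb i * w i = 0} := by
    refine (Nat.card_eq_of_bijective (fun w' => ⟨fun i => ψ (w'.1 i),
      fun i => ⟨(((w'.1 i).val : ℕ) : ZMod (p^e)), rfl⟩,
      (hiff u w'.1).mpr w'.2.1, (hiff v w'.1).mpr w'.2.2⟩) ⟨?_, ?_⟩).symm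
    · intro w1 w2 h
      apply Subtype.ext
      funext i
      exact hψinj (congrFun (congrArg Subtype.val h) i)
    · rintro ⟨w, hdiv, h1, h2⟩
      have hw : ∀ i, ψ (ZMod.castHom hdvd (ZMod (p^f)) (Classical.choose (hdiv i))) = w i := by
        intro i
        rw [hψcast]
        exact (Classical.choose_spec (hdiv i)).symm
      refine ⟨⟨fun i => ZMod.castHom hdvd (ZMod (p^f)) (Classical.choose (hdiv i)), ?_, ?_⟩, ?_⟩
      · apply (hiff u _).mp
        rw [show (∑ i, u i * ψ (ZMod.castHom hdvd (ZMod (p^f)) (Classical.choose (hdiv i))))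
            = ∑ i, u i * w i from Finset.sum_congr rfl fun i _ => by rw [hw i]]
        exact h1
      · apply (hiff v _).mp
        rw [show (∑ i, v i * ψ (ZMod.castHom hdvd (ZMod (p^f)) (Classical.choose (hdiv i))))
            = ∑ i, v i * w i from Finset.sum_congr rfl fun i _ => by rw [hw i]]
        exact h2
      · apply Subtype.ext
        funext i
        exact hw i
  have hcl := Stmt7Aux.card_linear hp hsf
    (fun i : {i : Fin n // i ≠ i0} => ub i0 * vb i.1 - ub i.1 * vb i0) j ε hjε
    (fun i => hdvd_f i0 i.1)
  rw [step0, Stmt7Aux.card_pair ub vb i0 hu0]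
  have hcard : Fintype.card {i : Fin n // i ≠ i0} = n - 1 := by
    have h := Fintype.card_subtype_compl (fun i : Fin n => i = i0)
    rw [Fintype.card_subtype_eq, Fintype.card_fin] at h
    exact h
  have hexp : s + f * (Fintype.card {i : Fin n // i ≠ i0} - 1) = s + f * (n - 2) := by
    rw [hcard, Nat.sub_sub]
  exact hcl.trans (congrArg (fun m => p ^ m) hexp)
end

section
/- Let p be a prime, e,n ≥ 2, and let u,v be primitive vectors in (Z/p^e)^n representing distinct points of P_{n,p^e}. Then the number of equivalence classes w ∈ P_{n,p^e} with ⟨u,w⟩ ≡ 0 and ⟨v,w⟩ ≡ 0 (mod p^e) equals (1/φ(p^e)) · ( p^{ν_p(ξ)+e(n-2)} − p^{min(ν_p(ξ),e−1)+(e−1)(n−2)} ), where ξ is the gcd of all 2x2 minors u_i v_j − u_j v_i and p^e, and φ is Euler's totient function. -/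
open scoped Classical

/-!
Count all solutions `w` of `⟨u, w⟩ = ⟨v, w⟩ = 0` in `(ℤ/p^e)^n` and subtract the non-primitive
ones. As `u` has a unit coordinate `u i₀`, eliminating `w i₀` leaves the single linear form with
coefficients the minors `u i₀ * v j - u j * v i₀`. Up to the unit `u i₀` these generate the same
ideal `(p ^ ν)` as all the minors (`ν = nuXi p e u v`), so the form has image `p ^ ν • ℤ/p^e`
and `p ^ (ν + e (n - 2))` zeros. The non-primitive solutions are the `p • y` with `y` a solution
of the reduced system modulo `p ^ (e - 1)`, counted by the same formula with `ν` replaced by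
`min ν (e - 1)`. Finally every point of `P_{n,p^e}` has exactly `φ(p^e)` primitive
representatives.
-/

theorem Nat.card_subtype_eq_card_and_add_card_and_not {α : Type*} [Finite α] (P Q : α → Prop) :
    Nat.card {x // P x} = Nat.card {x // P x ∧ Q x} + Nat.card {x // P x ∧ ¬ Q x} := by
  rw [← Nat.card_congr (Equiv.subtypeSubtypeEquivSubtypeInter P Q),
    ← Nat.card_congr (Equiv.subtypeSubtypeEquivSubtypeInter P (¬ Q ·)), ← Nat.card_sum,
    Nat.card_congr (Equiv.sumCompl _)]

section Elimination

variable {R ι : Type*} [CommRing R]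

theorem card_dotProduct_eq_zero_and_eq_card_restrict [Fintype ι] [DecidableEq ι] {u g : ι → R}
    {i₀ : ι} (hu : IsUnit (u i₀)) (hg : g i₀ = 0) :
    Nat.card {w // u ⬝ᵥ w = 0 ∧ g ⬝ᵥ w = 0}
      = Nat.card {x : {j // j ≠ i₀} → R // ∑ j : {j // j ≠ i₀}, g j * x j = 0} := by
  have split (h w : ι → R) : h ⬝ᵥ w = h i₀ * w i₀ + ∑ j : {j // j ≠ i₀}, h j * w j :=
    Fintype.sum_eq_add_sum_subtype_ne _ i₀
  let restrict (w : {w // u ⬝ᵥ w = 0 ∧ g ⬝ᵥ w = 0}) :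
      {x : {j // j ≠ i₀} → R // ∑ j : {j // j ≠ i₀}, g j * x j = 0} :=
    ⟨fun j => w.1 j, by simpa [split, hg] using w.2.2⟩
  refine Nat.card_eq_of_bijective restrict ⟨fun w w' hww' => ?_, fun x => ?_⟩
  · have hoff (j : {j // j ≠ i₀}) : w.1 j = w'.1 j := congrFun (congrArg Subtype.val hww') j
    have hpivot : u i₀ * w.1 i₀ = u i₀ * w'.1 i₀ := by
      have h := w.2.1.trans w'.2.1.symm
      rw [split, split] at h
      simp only [hoff] at h
      exact add_right_cancel h
    refine Subtype.ext (funext fun i => ?_)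
    by_cases hi : i = i₀
    · exact hi ▸ hu.mul_left_cancel hpivot
    · exact hoff ⟨i, hi⟩
  · let w : ι → R := fun i =>
      if h : i = i₀ then -↑hu.unit⁻¹ * ∑ j : {j // j ≠ i₀}, u j * x.1 j else x.1 ⟨i, h⟩
    have hw (j : {j // j ≠ i₀}) : w j = x.1 j := dif_neg j.2
    refine ⟨⟨w, ?_, ?_⟩, Subtype.ext (funext hw)⟩
    · rw [split]
      simp only [hw, w, dif_pos, ← mul_assoc, mul_neg, IsUnit.mul_val_inv]
      ring
    · simpa [split, hg, hw] using x.2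

theorem card_dotProduct_eq_zero_and_eq_card_minor [Fintype ι] [DecidableEq ι] {u v : ι → R}
    {i₀ : ι} (hu : IsUnit (u i₀)) :
    Nat.card {w // u ⬝ᵥ w = 0 ∧ v ⬝ᵥ w = 0}
      = Nat.card {x : {j // j ≠ i₀} → R //
          ∑ j : {j // j ≠ i₀}, (u i₀ * v j - u j * v i₀) * x j = 0} := by
  let g : ι → R := u i₀ • v - v i₀ • u
  have hg : g i₀ = 0 := by simp [g, mul_comm]
  have hsystem (w : ι → R) : (u ⬝ᵥ w = 0 ∧ v ⬝ᵥ w = 0) ↔ (u ⬝ᵥ w = 0 ∧ g ⬝ᵥ w = 0) := by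
    simp only [g, sub_dotProduct, smul_dotProduct, smul_eq_mul]
    constructor
    · rintro ⟨h1, h2⟩
      simp [h1, h2]
    · rintro ⟨h1, h2⟩
      simpa [h1, hu.mul_right_eq_zero] using h2
  rw [Nat.card_congr (Equiv.subtypeEquivRight hsystem),
    card_dotProduct_eq_zero_and_eq_card_restrict hu hg]
  simp only [g, Pi.sub_apply, Pi.smul_apply, smul_eq_mul, mul_comm (v i₀)]

theorem dvd_minor_of_forall_dvd_minor_pivot {u v : ι → R} {i₀ : ι}
    (hu : IsUnit (u i₀)) {d : R} (hd : ∀ j, d ∣ u i₀ * v j - u j * v i₀) (i j : ι) :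
    d ∣ u i * v j - u j * v i := by
  have key : u i₀ * (u i * v j - u j * v i)
      = u i * (u i₀ * v j - u j * v i₀) - u j * (u i₀ * v i - u i * v i₀) := by ring
  rw [← hu.dvd_mul_left, key]
  exact dvd_sub ((hd j).mul_left _) ((hd i).mul_left _)

end Elimination

theorem ZMod.natCast_dvd_iff_dvd_val {N d : ℕ} [NeZero N] (hd : d ∣ N) (x : ZMod N) :
    (d : ZMod N) ∣ x ↔ d ∣ x.val := by
  constructor
  · rintro ⟨y, rfl⟩
    rw [← natCast_eq_zero_iff, ← cast_eq_val, ← castHom_apply (h := hd), map_mul, map_natCast,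
      natCast_self, zero_mul]
  · rintro ⟨s, hs⟩
    exact ⟨s, by rw [← natCast_zmod_val x, hs, Nat.cast_mul]⟩

theorem orthoPt_mk_iff {m n : ℕ} (u w : {x : Fin n → ZMod m // Primitive x}) :
    orthoPt m n ⟦u⟧ ⟦w⟧ ↔ u.1 ⬝ᵥ w.1 = 0 := by
  refine ⟨fun h => h u w rfl rfl, fun h u' w' hu hw => ?_⟩
  obtain ⟨l, hl⟩ := Quotient.exact hu
  obtain ⟨k, hk⟩ := Quotient.exact hw
  have hscale : u.1 ⬝ᵥ w.1 = (l * k : ZMod m) * (u'.1 ⬝ᵥ w'.1) := by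
    rw [hl, hk]
    simp only [dotProduct, Finset.mul_sum]
    exact Finset.sum_congr rfl fun i _ => by ring
  rw [hscale] at h
  exact (Units.mul_right_eq_zero (u := l * k)).mp (by exact_mod_cast h)

section PrimePower

variable {p : ℕ} [hp : Fact p.Prime] {e f n : ℕ}

theorem natCast_pow_dvd_iff_dvd_val {k : ℕ} (hk : k ≤ f) (x : ZMod (p ^ f)) :
    (p : ZMod (p ^ f)) ^ k ∣ x ↔ p ^ k ∣ x.val := by
  rw [← Nat.cast_pow]
  exact ZMod.natCast_dvd_iff_dvd_val (pow_dvd_pow p hk) x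

theorem isUnit_iff_not_natCast_dvd (hf : f ≠ 0) (x : ZMod (p ^ f)) :
    IsUnit x ↔ ¬ (p : ZMod (p ^ f)) ∣ x := by
  rw [← ZMod.natCast_zmod_val x, ZMod.isUnit_iff_coprime, Nat.coprime_pow_right_iff
    (Nat.pos_of_ne_zero hf), Nat.coprime_comm, hp.out.coprime_iff_not_dvd, ZMod.natCast_zmod_val,
    ZMod.natCast_dvd_iff_dvd_val (dvd_pow_self p hf)]

theorem primitive_iff_exists_isUnit (hf : f ≠ 0) (u : Fin n → ZMod (p ^ f)) :
    Primitive u ↔ ∃ i, IsUnit (u i) := by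
  simp only [isUnit_iff_not_natCast_dvd hf, ZMod.natCast_dvd_iff_dvd_val (dvd_pow_self p hf)]
  rw [Primitive, ← Nat.Coprime, Nat.coprime_pow_right_iff (Nat.pos_of_ne_zero hf),
    Nat.coprime_comm, hp.out.coprime_iff_not_dvd, Finset.dvd_gcd_iff, not_forall]
  simp

theorem pow_dvd_iff_le_nuVal {k : ℕ} (hk : k ≤ f) (x : ZMod (p ^ f)) :
    (p : ZMod (p ^ f)) ^ k ∣ x ↔ k ≤ nuVal p f x := by
  rw [natCast_pow_dvd_iff_dvd_val hk, nuVal]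
  split_ifs with hx
  · simp [hx, hk]
  · exact padicValNat_dvd_iff_le ((ZMod.val_ne_zero x).mpr hx)

theorem nuVal_le_s8 (x : ZMod (p ^ f)) : nuVal p f x ≤ f := by
  by_contra! h
  have hx : x ≠ 0 := by rintro rfl; simp [nuVal] at h
  have := (pow_dvd_iff_le_nuVal le_rfl x).mpr h.le
  rw [← Nat.cast_pow, ZMod.natCast_self, zero_dvd_iff] at this
  exact hx this

theorem exists_isUnit_of_pow_dvd_of_not_pow_succ_dvd (hf : f ≠ 0) {μ : ℕ} {x : ZMod (p ^ f)}
    (hdvd : (p : ZMod (p ^ f)) ^ μ ∣ x) (hndvd : ¬ (p : ZMod (p ^ f)) ^ (μ + 1) ∣ x) :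
    ∃ t, IsUnit t ∧ x = p ^ μ * t := by
  obtain ⟨t, rfl⟩ := hdvd
  refine ⟨t, (isUnit_iff_not_natCast_dvd hf t).mpr fun ht => hndvd ?_, rfl⟩
  rw [pow_succ]
  exact mul_dvd_mul_left _ ht

theorem card_zmultiples_natCast_pow {μ : ℕ} (hμ : μ ≤ f) :
    Nat.card (AddSubgroup.zmultiples ((p : ZMod (p ^ f)) ^ μ)) = p ^ (f - μ) := by
  rw [Nat.card_zmultiples, ← Nat.cast_pow, ZMod.addOrderOf_coe _ (pow_ne_zero f hp.out.ne_zero),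
    Nat.gcd_eq_right (pow_dvd_pow p hμ), Nat.pow_div hμ hp.out.pos]

theorem card_dotProduct_eq_zero_mul {κ : Type*} [Fintype κ] (c : κ → ZMod (p ^ f)) {μ : ℕ}
    (hμ : μ ≤ f) (hdvd : ∀ j, (p : ZMod (p ^ f)) ^ μ ∣ c j)
    (hmax : μ < f → ∃ j, ¬ (p : ZMod (p ^ f)) ^ (μ + 1) ∣ c j) :
    Nat.card {x // c ⬝ᵥ x = 0} * p ^ (f - μ) = p ^ (f * Fintype.card κ) := by
  let form : (κ → ZMod (p ^ f)) →+ ZMod (p ^ f) := AddMonoidHom.mk' (c ⬝ᵥ ·) (dotProduct_add c)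
  have range_form : form.range = AddSubgroup.zmultiples ((p : ZMod (p ^ f)) ^ μ) := by
    refine le_antisymm ?_ (AddSubgroup.zmultiples_le.mpr ?_)
    · rintro _ ⟨x, rfl⟩
      obtain ⟨b, hb⟩ := Finset.dvd_sum fun j (_ : j ∈ Finset.univ) => (hdvd j).mul_right (x j)
      obtain ⟨k, rfl⟩ := ZMod.intCast_surjective b
      refine ⟨k, ?_⟩
      change k • (p : ZMod (p ^ f)) ^ μ = c ⬝ᵥ x
      rw [zsmul_eq_mul, mul_comm]
      exact hb.symm
    rcases hμ.lt_or_eq with hlt | rfl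
    · obtain ⟨j, hj⟩ := hmax hlt
      obtain ⟨t, ht, hcj⟩ := exists_isUnit_of_pow_dvd_of_not_pow_succ_dvd (by omega) (hdvd j) hj
      refine ⟨Pi.single j ↑ht.unit⁻¹, ?_⟩
      simp [form, dotProduct_single, hcj, mul_assoc]
    · rw [← Nat.cast_pow, ZMod.natCast_self]
      exact zero_mem _
  change Nat.card form.ker * _ = _
  rw [← card_zmultiples_natCast_pow hμ, ← range_form, ← AddSubgroup.index_ker,
    AddSubgroup.card_mul_index, Nat.card_pi, Finset.prod_const, Nat.card_zmod, Finset.card_univ,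
    ← pow_mul]

theorem le_nuXi_iff (hn : n ≠ 0) {k : ℕ} (hk : k ≤ f) (u v : Fin n → ZMod (p ^ f)) :
    k ≤ nuXi p f u v ↔ ∀ i j, (p : ZMod (p ^ f)) ^ k ∣ u i * v j - u j * v i := by
  have hne : {k | ∃ i j : Fin n, k = nuVal p f (u i * v j - u j * v i)}.Nonempty :=
    ⟨_, ⟨0, by omega⟩, ⟨0, by omega⟩, rfl⟩
  simp only [pow_dvd_iff_le_nuVal hk]
  exact ⟨fun h i j => h.trans (Nat.sInf_le ⟨i, j, rfl⟩),
    fun h => by obtain ⟨i, j, hij⟩ := Nat.sInf_mem hne; rw [nuXi, hij]; exact h i j⟩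

theorem nuXi_le (hn : n ≠ 0) (u v : Fin n → ZMod (p ^ f)) : nuXi p f u v ≤ f :=
  (Nat.sInf_le ⟨⟨0, by omega⟩, ⟨0, by omega⟩, rfl⟩ : nuXi p f u v ≤ _).trans (nuVal_le_s8 _)

theorem card_dotProduct_eq_zero_and_dotProduct_eq_zero (hn : 2 ≤ n)
    {u : Fin n → ZMod (p ^ f)} {i₀ : Fin n} (hu : IsUnit (u i₀)) (v : Fin n → ZMod (p ^ f)) :
    Nat.card {w // u ⬝ᵥ w = 0 ∧ v ⬝ᵥ w = 0} = p ^ (nuXi p f u v + f * (n - 2)) := by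
  set μ := nuXi p f u v
  have hμ : μ ≤ f := nuXi_le (by omega) u v
  have hmax : μ < f →
      ∃ j : {j // j ≠ i₀}, ¬ (p : ZMod (p ^ f)) ^ (μ + 1) ∣ u i₀ * v j - u j * v i₀ := by
    intro hlt
    by_contra! hrow
    have hall : ∀ j, (p : ZMod (p ^ f)) ^ (μ + 1) ∣ u i₀ * v j - u j * v i₀ := fun j => by
      by_cases hj : j = i₀
      · simp [hj]
      · exact hrow ⟨j, hj⟩
    have := (le_nuXi_iff (by omega) hlt u v).mpr (dvd_minor_of_forall_dvd_minor_pivot hu hall)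
    omega
  have hcard := card_dotProduct_eq_zero_mul (fun j : {j // j ≠ i₀} => u i₀ * v j - u j * v i₀)
    hμ (fun j => (le_nuXi_iff (by omega) hμ u v).mp le_rfl i₀ j) hmax
  have hexp : f * Fintype.card {j // j ≠ i₀} = (μ + f * (n - 2)) + (f - μ) := by
    obtain ⟨m, rfl⟩ := Nat.exists_eq_add_of_le' hn
    simp only [Fintype.card_subtype_compl, Fintype.card_fin, Fintype.card_unique]
    rw [show m + 2 - 1 = m + 1 by omega, show m + 2 - 2 = m by omega, Nat.mul_succ]
    omega
  rw [card_dotProduct_eq_zero_and_eq_card_minor hu]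
  rw [hexp, pow_add] at hcard
  exact Nat.eq_of_mul_eq_mul_right (pow_pos hp.out.pos _) hcard

local notation "π" => ZMod.castHom (pow_dvd_pow p (Nat.sub_le e 1)) (ZMod (p ^ (e - 1)))

theorem pow_dvd_castHom_iff {k : ℕ} (hk : k ≤ e - 1) (z : ZMod (p ^ e)) :
    (p : ZMod (p ^ (e - 1))) ^ k ∣ π z ↔ (p : ZMod (p ^ e)) ^ k ∣ z := by
  rw [natCast_pow_dvd_iff_dvd_val hk, natCast_pow_dvd_iff_dvd_val (hk.trans (Nat.sub_le e 1)),
    ZMod.castHom_apply, ZMod.cast_eq_val, ZMod.val_natCast]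
  exact Nat.dvd_mod_iff (pow_dvd_pow p hk)

theorem nuXi_red (hn : n ≠ 0) (u v : Fin n → ZMod (p ^ e)) :
    nuXi p (e - 1) (red p e u) (red p e v) = min (nuXi p e u v) (e - 1) := by
  have hiff (k : ℕ) (hk : k ≤ e - 1) :
      k ≤ nuXi p (e - 1) (red p e u) (red p e v) ↔ k ≤ min (nuXi p e u v) (e - 1) := by
    simp only [le_min_iff, hk, and_true, le_nuXi_iff hn hk,
      le_nuXi_iff hn (hk.trans (Nat.sub_le e 1)),
      red, ← map_mul, ← map_sub, pow_dvd_castHom_iff hk]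
  exact le_antisymm ((hiff _ (nuXi_le hn _ _)).mp le_rfl) ((hiff _ (min_le_right _ _)).mpr le_rfl)

theorem natCast_mul_eq_natCast_mul_iff (he : e ≠ 0) (a b : ZMod (p ^ e)) :
    (p : ZMod (p ^ e)) * a = p * b ↔ π a = π b := by
  rw [← sub_eq_zero, ← mul_sub, ← sub_eq_zero (a := π a), ← map_sub]
  generalize a - b = x
  have hpe : p ^ e = p * p ^ (e - 1) := by rw [← pow_succ', Nat.sub_add_cancel (by omega)]
  rw [← ZMod.natCast_zmod_val x, ← Nat.cast_mul, map_natCast, ZMod.natCast_eq_zero_iff,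
    ZMod.natCast_eq_zero_iff]
  generalize x.val = m
  rw [hpe]
  exact Nat.mul_dvd_mul_iff_left hp.out.pos

theorem castHom_natCast_val (y : ZMod (p ^ (e - 1))) : π ((y.val : ℕ) : ZMod (p ^ e)) = y := by
  rw [map_natCast, ZMod.natCast_zmod_val]

theorem not_primitive_iff_forall_dvd (he : e ≠ 0) (w : Fin n → ZMod (p ^ e)) :
    ¬ Primitive w ↔ ∀ i, (p : ZMod (p ^ e)) ∣ w i := by
  simp only [primitive_iff_exists_isUnit he, isUnit_iff_not_natCast_dvd he, not_exists, not_not]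

theorem card_dotProduct_eq_zero_and_not_primitive (he : e ≠ 0) (u v : Fin n → ZMod (p ^ e)) :
    Nat.card {w // (u ⬝ᵥ w = 0 ∧ v ⬝ᵥ w = 0) ∧ ¬ Primitive w}
      = Nat.card {y // red p e u ⬝ᵥ y = 0 ∧ red p e v ⬝ᵥ y = 0} := by
  let lift (y : Fin n → ZMod (p ^ (e - 1))) : Fin n → ZMod (p ^ e) := fun i => p * (y i).val
  have lift_eq_iff (y w) : lift y = w ↔ ∀ i, (p : ZMod (p ^ e)) * (y i).val = w i := funext_iff
  have dotProduct_lift (g y) : g ⬝ᵥ lift y = 0 ↔ red p e g ⬝ᵥ y = 0 := by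
    have : g ⬝ᵥ lift y = p * (g ⬝ᵥ fun i => ((y i).val : ZMod (p ^ e))) := by
      rw [← smul_eq_mul, ← dotProduct_smul]; rfl
    rw [this, ← mul_zero (p : ZMod (p ^ e)), natCast_mul_eq_natCast_mul_iff he,
      RingHom.map_dotProduct, map_zero]
    simp only [Function.comp_def, castHom_natCast_val]
    rfl
  have range_lift (w) : ¬ Primitive w ↔ ∃ y, lift y = w := by
    simp only [not_primitive_iff_forall_dvd he, lift_eq_iff]
    constructor
    · intro hw
      choose t ht using hw
      refine ⟨fun i => π (t i), fun i => ?_⟩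
      rw [ht, natCast_mul_eq_natCast_mul_iff he, castHom_natCast_val]
    · rintro ⟨y, hy⟩ i
      exact ⟨_, (hy i).symm⟩
  have lift_injective : Function.Injective lift := fun a b hab => funext fun i => by
    simpa only [castHom_natCast_val] using
      (natCast_mul_eq_natCast_mul_iff he _ _).mp (congrFun hab i)
  let toSolution (y : {y // red p e u ⬝ᵥ y = 0 ∧ red p e v ⬝ᵥ y = 0}) :
      {w // (u ⬝ᵥ w = 0 ∧ v ⬝ᵥ w = 0) ∧ ¬ Primitive w} :=
    ⟨lift y.1, ⟨(dotProduct_lift u y.1).mpr y.2.1, (dotProduct_lift v y.1).mpr y.2.2⟩,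
      (range_lift _).mpr ⟨y.1, rfl⟩⟩
  refine (Nat.card_eq_of_bijective toSolution ⟨fun a b hab => ?_, ?_⟩).symm
  · exact Subtype.ext (lift_injective (congrArg Subtype.val hab))
  · rintro ⟨w, ⟨hu, hv⟩, hw⟩
    obtain ⟨y, rfl⟩ := (range_lift w).mp hw
    exact ⟨⟨y, (dotProduct_lift u y).mp hu, (dotProduct_lift v y).mp hv⟩, rfl⟩

theorem Primitive.unit_mul (hf : f ≠ 0) (l : (ZMod (p ^ f))ˣ) {w : Fin n → ZMod (p ^ f)}
    (hw : Primitive w) : Primitive (fun i => (l : ZMod (p ^ f)) * w i) := by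
  obtain ⟨i, hi⟩ := (primitive_iff_exists_isUnit hf w).mp hw
  exact (primitive_iff_exists_isUnit hf _).mpr ⟨i, l.isUnit.mul hi⟩

theorem card_fiber_mk (hf : f ≠ 0) (W : ProjPt (p ^ f) n) :
    Nat.card {w // Quotient.mk (projSetoid (p ^ f) n) w = W} = Nat.totient (p ^ f) := by
  let w₀ := W.out
  let smul (l : (ZMod (p ^ f))ˣ) : {w // Quotient.mk (projSetoid (p ^ f) n) w = W} :=
    ⟨⟨fun i => l * w₀.1 i, Primitive.unit_mul hf l w₀.2⟩,
      (Quotient.sound (⟨l, rfl⟩ : assoc w₀.1 _)).symm.trans W.out_eq⟩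
  rw [← ZMod.card_units_eq_totient, ← Nat.card_eq_fintype_card]
  refine (Nat.card_eq_of_bijective smul ⟨fun l k hlk => ?_, fun w => ?_⟩).symm
  · obtain ⟨i, hi⟩ := (primitive_iff_exists_isUnit hf w₀.1).mp w₀.2
    exact Units.ext (hi.mul_right_cancel (congrFun (congrArg (fun w => w.1.1) hlk) i))
  · obtain ⟨l, hl⟩ := Quotient.exact (W.out_eq.trans w.2.symm)
    exact ⟨l, Subtype.ext (Subtype.ext hl.symm)⟩

theorem card_primitive_mk (hf : f ≠ 0) (S : ProjPt (p ^ f) n → Prop) :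
    Nat.card {w // S (Quotient.mk (projSetoid (p ^ f) n) w)}
      = Nat.totient (p ^ f) * Nat.card {W // S W} := by
  rw [← Nat.card_congr (Equiv.sigmaSubtypeFiberEquivSubtype (Quotient.mk (projSetoid (p ^ f) n))
    (q := S) fun _ => Iff.rfl), Nat.card_sigma, Finset.sum_congr rfl fun W _ => card_fiber_mk hf W.1, Finset.sum_const, Finset.card_univ,
    smul_eq_mul, Nat.card_eq_fintype_card, mul_comm]

end PrimePower

theorem stmt8_general (p e n : ℕ) (hp : p.Prime) (he : 2 ≤ e) (hn : 2 ≤ n)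
    (u v : Fin n → ZMod (p^e)) (hu : Primitive u) (hv : Primitive v) :
    Nat.totient (p^e) *
      Nat.card {W : ProjPt (p^e) n //
        orthoPt (p^e) n (Quotient.mk (projSetoid (p^e) n) ⟨u, hu⟩) W ∧
        orthoPt (p^e) n (Quotient.mk (projSetoid (p^e) n) ⟨v, hv⟩) W}
      = p^(nuXi p e u v + e*(n-2)) - p^(min (nuXi p e u v) (e-1) + (e-1)*(n-2)) := by
  have : Fact p.Prime := ⟨hp⟩
  obtain ⟨i₀, hi₀⟩ := (primitive_iff_exists_isUnit (by omega) u).mp hu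
  have hprimitive : Nat.card {w // (u ⬝ᵥ w = 0 ∧ v ⬝ᵥ w = 0) ∧ Primitive w}
      = Nat.totient (p^e) * Nat.card {W : ProjPt (p^e) n //
        orthoPt (p^e) n (Quotient.mk (projSetoid (p^e) n) ⟨u, hu⟩) W ∧
        orthoPt (p^e) n (Quotient.mk (projSetoid (p^e) n) ⟨v, hv⟩) W} := by
    rw [← card_primitive_mk (by omega)]
    refine Nat.card_congr ((Equiv.subtypeEquivRight fun _ => and_comm).trans
      ((Equiv.subtypeSubtypeEquivSubtypeInter _ _).symm.trans
        (Equiv.subtypeEquivRight fun w => ?_)))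
    rw [orthoPt_mk_iff, orthoPt_mk_iff]
  have hnonprimitive : Nat.card {w // (u ⬝ᵥ w = 0 ∧ v ⬝ᵥ w = 0) ∧ ¬ Primitive w}
      = p ^ (min (nuXi p e u v) (e - 1) + (e - 1) * (n - 2)) := by
    rw [card_dotProduct_eq_zero_and_not_primitive (by omega), ← nuXi_red (by omega)]
    exact card_dotProduct_eq_zero_and_dotProduct_eq_zero hn
      (hi₀.map (ZMod.castHom (pow_dvd_pow p (Nat.sub_le e 1)) (ZMod (p ^ (e - 1))))) _
  rw [← hprimitive, ← hnonprimitive, ← card_dotProduct_eq_zero_and_dotProduct_eq_zero hn hi₀ v,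
    Nat.card_subtype_eq_card_and_add_card_and_not (fun w => u ⬝ᵥ w = 0 ∧ v ⬝ᵥ w = 0) Primitive,
    Nat.add_sub_cancel]

theorem stmt8 (p e n : ℕ) (hp : p.Prime) (he : 2 ≤ e) (hn : 2 ≤ n)
    (u v : Fin n → ZMod (p^e)) (hu : Primitive u) (hv : Primitive v)
    (hne : ¬ assoc u v) :
    Nat.totient (p^e) *
      Nat.card {W : ProjPt (p^e) n //
        orthoPt (p^e) n (Quotient.mk (projSetoid (p^e) n) ⟨u, hu⟩) W ∧
        orthoPt (p^e) n (Quotient.mk (projSetoid (p^e) n) ⟨v, hv⟩) W}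
      = p^(nuXi p e u v + e*(n-2)) - p^(min (nuXi p e u v) (e-1) + (e-1)*(n-2)) :=
  stmt8_general p e n hp he hn u v hu hv
end

section
/- Let p be a prime, e ≥ 2, n ≥ 2. Let u,v be primitive vectors in (Z/p^e)^n whose reductions u', v' mod p^{e-1} represent distinct points of P_{n,p^{e-1}}. Let ξ (resp. η) be the gcd of all 2x2 minors of (u,v) with p^e (resp. of (u',v') with p^{e-1}). Then ν_p(ξ) = ν_p(η) < e-1. -/
open scoped Classical

theorem stmt11 (p e n : ℕ) (hp : p.Prime) (he : 2 ≤ e) (hn : 2 ≤ n)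
    (u v : Fin n → ZMod (p^e)) (hu : Primitive u) (hv : Primitive v)
    (hne : ¬ assoc (red p e u) (red p e v)) :
    nuXi p e u v = nuXi p (e-1) (red p e u) (red p e v) ∧ nuXi p e u v < e - 1 := by
  have hne0 : (p:ℕ) ≠ 0 := hp.pos.ne'
  haveI : Fact p.Prime := ⟨hp⟩
  haveI hqz : NeZero (p^(e-1)) := ⟨pow_ne_zero _ hne0⟩
  haveI hmz : NeZero (p^e) := ⟨pow_ne_zero _ hne0⟩
  set u' := red p e u with hu'def
  set v' := red p e v with hv'def
  set ξ : Fin n → Fin n → ZMod (p^e) := fun i j => u i * v j - u j * v i with hξ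
  set η : Fin n → Fin n → ZMod (p^(e-1)) := fun i j => u' i * v' j - u' j * v' i with hη
  have hval : ∀ x : ZMod (p^e),
      ((ZMod.castHom (pow_dvd_pow p (Nat.sub_le e 1)) (ZMod (p^(e-1))) x)).val
        = x.val % p^(e-1) := by
    intro x
    rw [ZMod.castHom_apply, ← ZMod.natCast_val, ZMod.val_natCast]
  have hηval : ∀ i j, (η i j).val = (ξ i j).val % p^(e-1) := by
    intro i j
    have : η i j = ZMod.castHom (pow_dvd_pow p (Nat.sub_le e 1)) (ZMod (p^(e-1))) (ξ i j) := by
      simp [hη, hξ, hu'def, hv'def, red, map_sub, map_mul]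
    rw [this, hval]
  -- primitive vectors have a coordinate not divisible by p
  have hprim : ∀ w : Fin n → ZMod (p^e), Primitive w → ∃ i, ¬ p ∣ (w i).val := by
    intro w hw
    by_contra h
    push_neg at h
    have hd : p ∣ Nat.gcd (Finset.univ.gcd fun i => (w i).val) (p^e) :=
      Nat.dvd_gcd (Finset.dvd_gcd fun i _ => h i) (dvd_pow_self p (by omega))
    rw [hw] at hd
    exact hp.one_lt.ne' (Nat.dvd_one.mp hd)
  have hpq : p ∣ p^(e-1) := dvd_pow_self p (by omega)
  -- units of reductions
  have hunit : ∀ (w : Fin n → ZMod (p^e)) (i : Fin n), ¬ p ∣ (w i).val →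
      IsUnit (red p e w i) := by
    intro w i hi
    have hv2 : (red p e w i).val = (w i).val % p^(e-1) := hval _
    have hnd : ¬ p ∣ (red p e w i).val := by
      rw [hv2, Nat.dvd_mod_iff hpq]; exact hi
    have : IsUnit (((red p e w i).val : ℕ) : ZMod (p^(e-1))) :=
      (ZMod.isUnit_iff_coprime _ _).mpr
        (Nat.Coprime.pow_right _ ((hp.coprime_iff_not_dvd.mpr hnd).symm))
    rwa [ZMod.natCast_rightInverse _] at this
  -- some minor of the reductions is nonzero
  have hex : ∃ i j, η i j ≠ 0 := by
    by_contra h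
    push_neg at h
    obtain ⟨i, hi⟩ := hprim u hu
    obtain ⟨j, hj⟩ := hprim v hv
    obtain ⟨ui, hui⟩ := hunit u i hi
    have hvj : IsUnit (v' j) := hunit v j hj
    have hlam : ∀ k, v' k = (v' i * ↑ui⁻¹) * u' k := by
      intro k
      have h0 : u' i * v' k = u' k * v' i := by
        have := h i k
        rw [hη] at this
        linear_combination this
      calc v' k = (↑ui⁻¹ * ↑ui) * v' k := by rw [ui.inv_mul, one_mul]
        _ = ↑ui⁻¹ * (u' i * v' k) := by rw [hui]; ring
        _ = ↑ui⁻¹ * (u' k * v' i) := by rw [h0]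
        _ = (v' i * ↑ui⁻¹) * u' k := by ring
    have hlu : IsUnit (v' i * ↑ui⁻¹) := by
      have := hvj
      rw [hlam j] at this
      exact isUnit_of_mul_isUnit_left this
    obtain ⟨L, hL⟩ := hlu
    exact hne ⟨L, funext fun k => by rw [hlam k, hL]⟩
  -- the valuation sets
  set S : Set ℕ := {k | ∃ i j : Fin n, k = nuVal p e (ξ i j)} with hS
  set T : Set ℕ := {k | ∃ i j : Fin n, k = nuVal p (e-1) (η i j)} with hT
  have hSdef : nuXi p e u v = sInf S := rfl
  have hTdef : nuXi p (e-1) u' v' = sInf T := rfl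
  have hTne : T.Nonempty := by
    obtain ⟨i, j, _⟩ := hex
    exact ⟨nuVal p (e-1) (η i j), i, j, rfl⟩
  set K := sInf T with hK
  obtain ⟨i0, j0, hK0⟩ := Nat.sInf_mem hTne
  -- K < e - 1
  have hpv_lt : ∀ x : ZMod (p^(e-1)), x ≠ 0 → padicValNat p x.val < e - 1 := by
    intro x hx
    have hx0 : x.val ≠ 0 := fun h0 => hx ((ZMod.val_eq_zero x).mp h0)
    have h1 : p ^ padicValNat p x.val ≤ x.val :=
      Nat.le_of_dvd (Nat.pos_of_ne_zero hx0) pow_padicValNat_dvd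
    have h2 : x.val < p^(e-1) := ZMod.val_lt x
    exact (Nat.pow_lt_pow_iff_right hp.one_lt).mp (lt_of_le_of_lt h1 h2)
  have hKlt : K < e - 1 := by
    obtain ⟨i, j, hij⟩ := hex
    have hle : K ≤ nuVal p (e-1) (η i j) := Nat.sInf_le ⟨i, j, rfl⟩
    have : nuVal p (e-1) (η i j) < e - 1 := by
      rw [nuVal, if_neg hij]; exact hpv_lt _ hij
    omega
  -- the minimizing minor is nonzero mod p^(e-1)
  have hη0 : η i0 j0 ≠ 0 := by
    intro h0
    rw [nuVal, if_pos h0] at hK0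
    omega
  have hKval : K = padicValNat p (η i0 j0).val := by
    rw [hK, hK0, nuVal, if_neg hη0]
  -- arithmetic transfer lemma
  have key : ∀ (a : ZMod (p^e)) (b : ZMod (p^(e-1))), b.val = a.val % p^(e-1) →
      b ≠ 0 → a ≠ 0 ∧ padicValNat p a.val = padicValNat p b.val := by
    intro a b hab hb
    have hbv : b.val ≠ 0 := fun h0 => hb ((ZMod.val_eq_zero b).mp h0)
    have hav : a.val ≠ 0 := by
      intro h0; rw [h0] at hab; simp at hab; exact hb hab
    refine ⟨fun h0 => hav (by rw [h0]; exact ZMod.val_zero), ?_⟩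
    set m := padicValNat p b.val with hm
    have hmlt : m < e - 1 := hpv_lt b hb
    have hm1 : p ^ m ∣ b.val := pow_padicValNat_dvd
    have hm2 : ¬ p ^ (m+1) ∣ b.val := by
      intro hd
      rcases (padicValNat_dvd_iff (m+1) b.val).mp hd with h1 | h1
      · exact hbv h1
      · omega
    have hqd1 : (p:ℕ) ^ m ∣ p^(e-1) := pow_dvd_pow p (by omega)
    have hqd2 : (p:ℕ) ^ (m+1) ∣ p^(e-1) := pow_dvd_pow p (by omega)
    have ha1 : p ^ m ∣ a.val := by
      rw [← Nat.div_add_mod a.val (p^(e-1)), ← hab]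
      exact Nat.dvd_add (hqd1.mul_right _) hm1
    have ha2 : ¬ p ^ (m+1) ∣ a.val := by
      intro hd
      apply hm2
      rw [hab, Nat.dvd_mod_iff hqd2]
      exact hd
    have h1 : m ≤ padicValNat p a.val := by
      rcases (padicValNat_dvd_iff m a.val).mp ha1 with h1 | h1
      · exact absurd h1 hav
      · exact h1
    have h2 : padicValNat p a.val < m + 1 := by
      by_contra hc
      exact ha2 ((padicValNat_dvd_iff (m+1) a.val).mpr (Or.inr (by omega)))
    omega
  -- the two sInf's agree
  have hmain : sInf S = K := by
    apply le_antisymm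
    · obtain ⟨hξ0, hξval⟩ := key (ξ i0 j0) (η i0 j0) (hηval i0 j0) hη0
      have : nuVal p e (ξ i0 j0) = K := by
        rw [nuVal, if_neg hξ0, hξval, hKval]
      have hle : sInf S ≤ nuVal p e (ξ i0 j0) := Nat.sInf_le ⟨i0, j0, rfl⟩
      rwa [this] at hle
    · apply le_csInf
      · exact ⟨nuVal p e (ξ i0 j0), i0, j0, rfl⟩
      rintro k ⟨a, b, rfl⟩
      by_cases hz : ξ a b = 0
      · rw [nuVal, if_pos hz]; omega
      rw [nuVal, if_neg hz]
      by_cases hbz : η a b = 0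
      · -- p^(e-1) divides (ξ a b).val
        have : (ξ a b).val % p^(e-1) = 0 := by
          rw [← hηval a b, (ZMod.val_eq_zero _).mpr hbz]
        have hd : p^(e-1) ∣ (ξ a b).val := Nat.dvd_of_mod_eq_zero this
        have hav : (ξ a b).val ≠ 0 := fun h0 => hz ((ZMod.val_eq_zero _).mp h0)
        have : e - 1 ≤ padicValNat p (ξ a b).val := by
          rcases (padicValNat_dvd_iff (e-1) (ξ a b).val).mp hd with h1 | h1
          · exact absurd h1 hav
          · exact h1
        omega
      · obtain ⟨_, hξval⟩ := key (ξ a b) (η a b) (hηval a b) hbz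
        have hKle : K ≤ nuVal p (e-1) (η a b) := Nat.sInf_le ⟨a, b, rfl⟩
        rw [nuVal, if_neg hbz] at hKle
        omega
  constructor
  · rw [hSdef, hmain]; exact hTdef.symm
  · rw [hSdef, hmain]; exact hKlt
end

section
/- Let p be a prime, e ≥ 2, n ≥ 2. Let u,v be primitive vectors in (Z/p^e)^n whose reductions u',v' mod p^{e-1} represent distinct points of P_{n,p^{e-1}}. Then b_{uv} = p^{n-3} · b'_{u'v'}, where b_{uv} is the number of common zeros in P_{n,p^e} of the linear forms given by u,v, and b'_{u'v'} is the number of common zeros in P_{n,p^{e-1}} of the forms given by u',v'. -/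
open scoped Classical

section aux
variable {p : ℕ} {n : ℕ}

lemma aux_dvd_mod_iff {k a b : ℕ} (h : k ∣ b) : k ∣ a % b ↔ k ∣ a :=
  Nat.dvd_mod_iff h

-- unit iff not p dvd val
lemma isUnit_zmod_iff (hp : p.Prime) {m : ℕ} (hm : 1 ≤ m) (x : ZMod (p^m)) :
    IsUnit x ↔ ¬ p ∣ x.val := by
  haveI : NeZero (p^m) := ⟨pow_ne_zero _ hp.ne_zero⟩
  constructor
  · intro h hdvd
    rw [← ZMod.natCast_zmod_val x, ZMod.isUnit_iff_coprime] at h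
    have h2 : p ∣ Nat.gcd x.val (p^m) := Nat.dvd_gcd hdvd (dvd_pow_self p (by omega))
    rw [Nat.Coprime] at h
    rw [h] at h2
    exact hp.one_lt.ne' (Nat.eq_one_of_dvd_one h2)
  · intro h
    rw [← ZMod.natCast_zmod_val x, ZMod.isUnit_iff_coprime]
    exact Nat.Coprime.pow_right _ ((Nat.coprime_comm).mp ((Nat.Prime.coprime_iff_not_dvd hp).mpr h))

lemma primitive_iff (hp : p.Prime) {m : ℕ} (hm : 1 ≤ m) (u : Fin n → ZMod (p^m)) :
    Primitive u ↔ ∃ i, IsUnit (u i) := by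
  haveI : NeZero (p^m) := ⟨pow_ne_zero _ hp.ne_zero⟩
  unfold Primitive
  rw [← Nat.coprime_iff_gcd_eq_one]
  constructor
  · intro h
    by_contra hc
    push_neg at hc
    have : ∀ i, p ∣ (u i).val := fun i => by
      have := hc i; rwa [isUnit_zmod_iff hp hm, not_not] at this
    have hpg : p ∣ Finset.univ.gcd fun i => (u i).val := Finset.dvd_gcd fun i _ => this i
    have h2 : p ∣ 1 := by
      have := Nat.dvd_gcd hpg (dvd_pow_self p (show m ≠ 0 by omega))
      rwa [Nat.Coprime.gcd_eq_one h] at this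
    exact hp.one_lt.ne' (Nat.eq_one_of_dvd_one h2)
  · rintro ⟨i, hi⟩
    rw [isUnit_zmod_iff hp hm] at hi
    have : ¬ p ∣ Finset.univ.gcd fun i => (u i).val := fun h =>
      hi (h.trans (Finset.gcd_dvd (Finset.mem_univ i)))
    exact Nat.Coprime.pow_right _ ((Nat.coprime_comm).mp ((Nat.Prime.coprime_iff_not_dvd hp).mpr this))

lemma cond_equiv (hp : p.Prime) {m ν : ℕ} (hν : ν ≤ m)
    (u v z : Fin n → ZMod (p^m)) (lam : ZMod (p^m))
    (hz : ∀ j, (p : ZMod (p^m))^ν * z j = v j - lam * u j)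
    (w : Fin n → ZMod (p^m)) (hw : ∑ k, u k * w k = 0) :
    (∑ k, v k * w k = 0) ↔ p^(m-ν) ∣ (∑ k, z k * w k).val := by
  haveI : NeZero (p^m) := ⟨pow_ne_zero _ hp.ne_zero⟩
  have keyN : ∀ b : ℕ, (p^m ∣ p^ν * b ↔ p^(m-ν) ∣ b) := by
    intro b
    have hsplit : p^m = p^ν * p^(m-ν) := by
      rw [← pow_add, Nat.add_sub_cancel' hν]
    rw [hsplit]
    exact mul_dvd_mul_iff_left (a := p^ν) (pow_ne_zero ν hp.ne_zero)
  have h1 : ∑ k, v k * w k = (p : ZMod (p^m))^ν * ∑ k, z k * w k := by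
    have hterm : ∀ k, v k * w k = lam * (u k * w k) + (p : ZMod (p^m))^ν * (z k * w k) := by
      intro k
      linear_combination (-(w k)) * hz k
    rw [Finset.sum_congr rfl fun k _ => hterm k, Finset.sum_add_distrib,
      ← Finset.mul_sum, ← Finset.mul_sum, hw, mul_zero, zero_add]
  have h2 : (p : ZMod (p^m))^ν * (∑ k, z k * w k)
      = (((p^ν * (∑ k, z k * w k).val : ℕ)) : ZMod (p^m)) := by
    rw [Nat.cast_mul, Nat.cast_pow, ZMod.natCast_zmod_val]
  rw [h1, h2, ZMod.natCast_eq_zero_iff]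
  exact keyN _

end aux

section quot
variable {m n : ℕ}

lemma sum_mul_smul (lam mu : ZMod m) (u w : Fin n → ZMod m) :
    ∑ i, (lam * u i) * (mu * w i) = (lam * mu) * ∑ i, u i * w i := by
  rw [Finset.mul_sum]
  exact Finset.sum_congr rfl fun i _ => by ring

lemma orthoPt_mk_iff_s12 (u₀ w₀ : {x : Fin n → ZMod m // Primitive x}) :
    orthoPt m n (Quotient.mk (projSetoid m n) u₀) (Quotient.mk (projSetoid m n) w₀)
      ↔ ∑ i, u₀.1 i * w₀.1 i = 0 := by
  constructor
  · intro h
    exact h u₀ w₀ rfl rfl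
  · intro h u w hu hw
    obtain ⟨lam, hlam⟩ : assoc u₀.1 u.1 := Quotient.exact hu.symm
    obtain ⟨mu, hmu⟩ : assoc w₀.1 w.1 := Quotient.exact hw.symm
    calc ∑ i, u.1 i * w.1 i
        = ∑ i, ((lam : ZMod m) * u₀.1 i) * ((mu : ZMod m) * w₀.1 i) := by
          simp only [hlam, hmu]
      _ = ((lam : ZMod m) * mu) * ∑ i, u₀.1 i * w₀.1 i := sum_mul_smul _ _ _ _
      _ = 0 := by rw [h, mul_zero]

end quot

section orthcount
variable {p n : ℕ}

lemma card_orth_mul (hp : p.Prime) {m : ℕ} (hm : 1 ≤ m)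
    (u₀ v₀ : Fin n → ZMod (p^m)) (hu₀ : Primitive u₀) (hv₀ : Primitive v₀) :
    Nat.card {w : Fin n → ZMod (p^m) //
        Primitive w ∧ (∑ k, u₀ k * w k = 0) ∧ (∑ k, v₀ k * w k = 0)}
    = Nat.card {W : ProjPt (p^m) n //
        orthoPt (p^m) n (Quotient.mk (projSetoid (p^m) n) ⟨u₀, hu₀⟩) W
        ∧ orthoPt (p^m) n (Quotient.mk (projSetoid (p^m) n) ⟨v₀, hv₀⟩) W}
      * (p^m).totient := by
  haveI : NeZero (p^m) := ⟨pow_ne_zero _ hp.ne_zero⟩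
  have hsmul : ∀ (c : Fin n → ZMod (p^m)) (mu : ZMod (p^m)) (w : Fin n → ZMod (p^m)),
      ∑ i, c i * (mu * w i) = mu * ∑ i, c i * w i := by
    intro c mu w
    rw [Finset.mul_sum]
    exact Finset.sum_congr rfl fun i _ => by ring
  have hprimsc : ∀ (mu : (ZMod (p^m))ˣ) (w : {x : Fin n → ZMod (p^m) // Primitive x}),
      Primitive (fun k => (mu : ZMod (p^m)) * w.1 k) := by
    intro mu w
    rw [primitive_iff hp hm]
    obtain ⟨i, hi⟩ := (primitive_iff hp hm w.1).mp w.2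
    exact ⟨i, (mu.isUnit).mul hi⟩
  have hscale : ∀ (mu : (ZMod (p^m))ˣ) (w : {x : Fin n → ZMod (p^m) // Primitive x})
      (hp' : Primitive (fun k => (mu : ZMod (p^m)) * w.1 k)),
      Quotient.mk (projSetoid (p^m) n) (⟨fun k => (mu : ZMod (p^m)) * w.1 k, hp'⟩ :
        {x : Fin n → ZMod (p^m) // Primitive x}) = Quotient.mk (projSetoid (p^m) n) w := by
    intro mu w hp'
    refine (Quotient.sound ?_).symm
    show assoc w.1 (fun k => (mu : ZMod (p^m)) * w.1 k)
    exact ⟨mu, rfl⟩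
  set U := Quotient.mk (projSetoid (p^m) n) (⟨u₀, hu₀⟩ : {x : Fin n → ZMod (p^m) // Primitive x})
  set V := Quotient.mk (projSetoid (p^m) n) (⟨v₀, hv₀⟩ : {x : Fin n → ZMod (p^m) // Primitive x})
  let F : {W : ProjPt (p^m) n // orthoPt (p^m) n U W ∧ orthoPt (p^m) n V W} × (ZMod (p^m))ˣ
      → {w : Fin n → ZMod (p^m) //
          Primitive w ∧ (∑ k, u₀ k * w k = 0) ∧ (∑ k, v₀ k * w k = 0)} := by
    rintro ⟨⟨W, hW1, hW2⟩, mu⟩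
    refine ⟨fun k => (mu : ZMod (p^m)) * (Quotient.out W).1 k, hprimsc mu _, ?_, ?_⟩
    · rw [hsmul]
      have h0 : orthoPt (p^m) n U (Quotient.mk (projSetoid (p^m) n) (Quotient.out W)) := by
        rwa [Quotient.out_eq]
      rw [(orthoPt_mk_iff_s12 _ _).mp h0, mul_zero]
    · rw [hsmul]
      have h0 : orthoPt (p^m) n V (Quotient.mk (projSetoid (p^m) n) (Quotient.out W)) := by
        rwa [Quotient.out_eq]
      rw [(orthoPt_mk_iff_s12 _ _).mp h0, mul_zero]
  have hbij : Function.Bijective F := by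
    constructor
    · rintro ⟨⟨W, hW1, hW2⟩, mu⟩ ⟨⟨W', hW1', hW2'⟩, mu'⟩ hEq
      have hvec : (fun k => (mu : ZMod (p^m)) * (Quotient.out W).1 k)
          = (fun k => (mu' : ZMod (p^m)) * (Quotient.out W').1 k) :=
        congrArg Subtype.val hEq
      have hWW : W = W' := by
        calc W = Quotient.mk (projSetoid (p^m) n) (Quotient.out W) := (Quotient.out_eq W).symm
          _ = Quotient.mk (projSetoid (p^m) n)
              (⟨fun k => (mu : ZMod (p^m)) * (Quotient.out W).1 k, hprimsc mu _⟩ :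
                {x : Fin n → ZMod (p^m) // Primitive x}) := (hscale mu _ _).symm
          _ = Quotient.mk (projSetoid (p^m) n)
              (⟨fun k => (mu' : ZMod (p^m)) * (Quotient.out W').1 k, hprimsc mu' _⟩ :
                {x : Fin n → ZMod (p^m) // Primitive x}) := by
                congr 1
                exact Subtype.ext hvec
          _ = Quotient.mk (projSetoid (p^m) n) (Quotient.out W') := hscale mu' _ _
          _ = W' := Quotient.out_eq W'
      subst hWW
      obtain ⟨i, hi⟩ := (primitive_iff hp hm (Quotient.out W).1).mp (Quotient.out W).2
      have hcomp : (mu : ZMod (p^m)) * (Quotient.out W).1 i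
          = (mu' : ZMod (p^m)) * (Quotient.out W).1 i := congrFun hvec i
      rw [mul_comm (mu : ZMod (p^m)) _, mul_comm (mu' : ZMod (p^m)) _] at hcomp
      have hmu : mu = mu' := Units.ext (hi.mul_left_cancel hcomp)
      subst hmu
      rfl
    · rintro ⟨w, hwp, h1, h2⟩
      set Wq := Quotient.mk (projSetoid (p^m) n)
        (⟨w, hwp⟩ : {x : Fin n → ZMod (p^m) // Primitive x}) with hWq
      have hc1 : orthoPt (p^m) n U Wq := (orthoPt_mk_iff_s12 _ _).mpr h1
      have hc2 : orthoPt (p^m) n V Wq := (orthoPt_mk_iff_s12 _ _).mpr h2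
      obtain ⟨mu, hmu⟩ : assoc (Quotient.out Wq).1 w := by
        have := Quotient.exact ((Quotient.out_eq Wq).trans hWq)
        exact this
      refine ⟨⟨⟨Wq, hc1, hc2⟩, mu⟩, ?_⟩
      exact Subtype.ext (congrArg (fun f => f) hmu.symm)
  have := Nat.card_congr (Equiv.ofBijective F hbij)
  rw [Nat.card_prod] at this
  rw [← this]
  congr 1
  rw [Nat.card_eq_fintype_card]
  exact ZMod.card_units_eq_totient _

end orthcount

lemma card_ker (hp : p.Prime) {m a : ℕ} (ha : a ≤ m)
    (u z : Fin n → ZMod (p^m)) {i j : Fin n}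
    (hdet : IsUnit (u i * z j - u j * z i)) :
    Nat.card {w : Fin n → ZMod (p^m) // (∑ k, u k * w k = 0) ∧ p^a ∣ (∑ k, z k * w k).val}
      * (p^m * p^a) = (p^m)^n := by
  haveI : NeZero (p^m) := ⟨pow_ne_zero _ hp.ne_zero⟩
  haveI : NeZero (p^a) := ⟨pow_ne_zero _ hp.ne_zero⟩
  set C := ZMod.castHom (pow_dvd_pow p ha) (ZMod (p^a)) with hCdef
  have hCval : ∀ x : ZMod (p^m), C x = ((x.val : ℕ) : ZMod (p^a)) := by
    intro x
    rw [ZMod.castHom_apply, ← ZMod.natCast_val]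
  let φ : (Fin n → ZMod (p^m)) →+ (ZMod (p^m)) × (ZMod (p^a)) :=
  { toFun := fun w => (∑ k, u k * w k, C (∑ k, z k * w k)),
    map_zero' := by simp,
    map_add' := by
      intro x y
      simp only [Pi.add_apply, mul_add, Finset.sum_add_distrib, map_add, Prod.mk_add_mk] }
  have h1 : (↑hdet.unit⁻¹ : ZMod (p^m)) * (u i * z j - u j * z i) = 1 := by
    exact hdet.val_inv_mul
  have hsurj : Function.Surjective φ := by
    rintro ⟨s, t⟩
    set T : ZMod (p^m) := ((t.val : ℕ) : ZMod (p^m)) with hTdef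
    have hT : C T = t := by
      rw [hTdef, map_natCast, ZMod.natCast_zmod_val]
    set A : ZMod (p^m) := ↑hdet.unit⁻¹ * (s * z j - T * u j) with hA
    set B : ZMod (p^m) := ↑hdet.unit⁻¹ * (u i * T - z i * s) with hB
    let W : Fin n → ZMod (p^m) := Pi.single i A + Pi.single j B
    refine ⟨W, ?_⟩
    have hsum : ∀ c : Fin n → ZMod (p^m),
        ∑ k, c k * W k = c i * A + c j * B := by
      intro c
      show ∑ k, c k * ((Pi.single i A : Fin n → ZMod (p^m)) k + (Pi.single j B : Fin n → ZMod (p^m)) k) = c i * A + c j * B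
      simp only [mul_add, Finset.sum_add_distrib]
      congr 1
      · simp [Pi.single_apply, mul_ite, Finset.sum_ite_eq']
      · simp [Pi.single_apply, mul_ite, Finset.sum_ite_eq']
    show (_, _) = (s, t)
    have e1 : ∑ k, u k * W k = s := by
      rw [hsum u, hA, hB]
      linear_combination s * h1
    have e2 : ∑ k, z k * W k = T := by
      rw [hsum z, hA, hB]
      linear_combination T * h1
    rw [e1, e2, hT]
  have h2 := AddSubgroup.card_eq_card_quotient_mul_card_addSubgroup φ.ker
  have h3 : Nat.card ((Fin n → ZMod (p^m)) ⧸ φ.ker) = p^m * p^a := by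
    rw [Nat.card_congr (QuotientAddGroup.quotientKerEquivOfSurjective φ hsurj).toEquiv]
    simp [Nat.card_prod, Nat.card_zmod]
  have h4 : Nat.card {w : Fin n → ZMod (p^m) //
      (∑ k, u k * w k = 0) ∧ p^a ∣ (∑ k, z k * w k).val} = Nat.card φ.ker := by
    refine Nat.card_congr (Equiv.subtypeEquivRight fun w => ?_)
    rw [AddMonoidHom.mem_ker]
    show _ ↔ (_, _) = (0, 0)
    rw [Prod.mk.injEq, hCval, ZMod.natCast_eq_zero_iff]
  have h5 : Nat.card (Fin n → ZMod (p^m)) = (p^m)^n := by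
    simp [Nat.card_pi, Nat.card_zmod]
  rw [h4, ← h5, h2, h3, mul_comm]

lemma card_prim_decomp (hp : p.Prime) {m a : ℕ} (hm : 1 ≤ m) (ha1 : 1 ≤ a) (ham : a ≤ m)
    (u z : Fin n → ZMod (p^m)) (uL zL : Fin n → ZMod (p^(m-1)))
    (huL : ∀ k, uL k = ZMod.castHom (pow_dvd_pow p (Nat.sub_le m 1)) (ZMod (p^(m-1))) (u k))
    (hzL : ∀ k, zL k = ZMod.castHom (pow_dvd_pow p (Nat.sub_le m 1)) (ZMod (p^(m-1))) (z k)) :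
    Nat.card {w : Fin n → ZMod (p^m) //
        Primitive w ∧ (∑ k, u k * w k = 0) ∧ p^a ∣ (∑ k, z k * w k).val}
      + Nat.card {y : Fin n → ZMod (p^(m-1)) //
          (∑ k, uL k * y k = 0) ∧ p^(a-1) ∣ (∑ k, zL k * y k).val}
    = Nat.card {w : Fin n → ZMod (p^m) // (∑ k, u k * w k = 0) ∧ p^a ∣ (∑ k, z k * w k).val} := by
  have hBridge : Nat.card {y : Fin n → ZMod (p^(m-1)) //
          (∑ k, uL k * y k = 0) ∧ p^(a-1) ∣ (∑ k, zL k * y k).val}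
      = Nat.card {y : Fin n → ZMod (p^(m-1)) //
          (∑ k, ZMod.castHom (pow_dvd_pow p (Nat.sub_le m 1)) (ZMod (p^(m-1))) (u k) * y k = 0)
          ∧ p^(a-1) ∣ (∑ k, ZMod.castHom (pow_dvd_pow p (Nat.sub_le m 1)) (ZMod (p^(m-1))) (z k) * y k).val} := by
    refine Nat.card_congr (Equiv.subtypeEquivRight fun y => ?_)
    have e1 : (∑ k, uL k * y k)
        = ∑ k, ZMod.castHom (pow_dvd_pow p (Nat.sub_le m 1)) (ZMod (p^(m-1))) (u k) * y k :=
      Finset.sum_congr rfl fun k _ => by rw [huL k]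
    have e2 : (∑ k, zL k * y k)
        = ∑ k, ZMod.castHom (pow_dvd_pow p (Nat.sub_le m 1)) (ZMod (p^(m-1))) (z k) * y k :=
      Finset.sum_congr rfl fun k _ => by rw [hzL k]
    rw [e1, e2]
  rw [hBridge]
  haveI : NeZero (p^m) := ⟨pow_ne_zero _ hp.ne_zero⟩
  haveI : NeZero (p^(m-1)) := ⟨pow_ne_zero _ hp.ne_zero⟩
  set R := ZMod.castHom (pow_dvd_pow p (Nat.sub_le m 1)) (ZMod (p^(m-1))) with hRdef
  have hpm : p^m = p^(m-1) * p := by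
    rw [← pow_succ, Nat.sub_add_cancel hm]
  have hpa : p^a = p^(a-1) * p := by
    rw [← pow_succ, Nat.sub_add_cancel ha1]
  have hRval : ∀ x : ZMod (p^m), R x = ((x.val : ℕ) : ZMod (p^(m-1))) := by
    intro x; rw [ZMod.castHom_apply, ← ZMod.natCast_val]
  have hmulcast : ∀ x : ZMod (p^m), (p : ZMod (p^m)) * x = ((p * x.val : ℕ) : ZMod (p^m)) := by
    intro x
    rw [Nat.cast_mul, ZMod.natCast_zmod_val]
  have keyNatM : ∀ b : ℕ, (p^m ∣ p * b ↔ p^(m-1) ∣ b) := by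
    intro b
    rw [hpm, mul_comm p b]
    exact Nat.mul_dvd_mul_iff_right hp.pos
  have keyNatA : ∀ b : ℕ, (p^a ∣ p * b ↔ p^(a-1) ∣ b) := by
    intro b
    rw [hpa, mul_comm p b]
    exact Nat.mul_dvd_mul_iff_right hp.pos
  have hvalcast : ∀ t : ZMod (p^(m-1)), (((t.val : ℕ) : ZMod (p^m))).val = t.val := by
    intro t
    rw [ZMod.val_natCast, Nat.mod_eq_of_lt
      (lt_of_lt_of_le (ZMod.val_lt t) (Nat.pow_le_pow_right hp.pos (Nat.sub_le m 1)))]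
  have key1 : ∀ x : ZMod (p^m), ((p : ZMod (p^m)) * x = 0) ↔ R x = 0 := by
    intro x
    rw [hRval, ZMod.natCast_eq_zero_iff, hmulcast, ZMod.natCast_eq_zero_iff]
    exact keyNatM x.val
  have key2 : ∀ x : ZMod (p^m), (p^a ∣ ((p : ZMod (p^m)) * x).val) ↔ p^(a-1) ∣ (R x).val := by
    intro x
    rw [hmulcast, ZMod.val_natCast, Nat.dvd_mod_iff (pow_dvd_pow p ham),
      hRval, ZMod.val_natCast, Nat.dvd_mod_iff (pow_dvd_pow p (Nat.sub_le_sub_right ham 1))]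
    exact keyNatA x.val
  -- the lift map data
  have key3 : ∀ (c : Fin n → ZMod (p^m)) (y : Fin n → ZMod (p^(m-1))),
      (∑ k, c k * ((p : ZMod (p^m)) * ((y k).val : ZMod (p^m))))
        = (p : ZMod (p^m)) * ∑ k, c k * ((y k).val : ZMod (p^m)) := by
    intro c y
    rw [Finset.mul_sum]
    exact Finset.sum_congr rfl fun k _ => by ring
  have key4 : ∀ (c : Fin n → ZMod (p^m)) (y : Fin n → ZMod (p^(m-1))),
      R (∑ k, c k * ((y k).val : ZMod (p^m))) = ∑ k, R (c k) * y k := by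
    intro c y
    rw [map_sum]
    refine Finset.sum_congr rfl fun k _ => ?_
    rw [map_mul, map_natCast, ZMod.natCast_zmod_val]
  -- equivalence between non-primitive solutions and level (m-1) solutions
  have hbij : Nat.card {y : Fin n → ZMod (p^(m-1)) //
          (∑ k, R (u k) * y k = 0) ∧ p^(a-1) ∣ (∑ k, R (z k) * y k).val}
      = Nat.card {w : Fin n → ZMod (p^m) //
          (¬ Primitive w) ∧ (∑ k, u k * w k = 0) ∧ p^a ∣ (∑ k, z k * w k).val} := by
    refine Nat.card_congr (Equiv.ofBijective (fun y =>
      ⟨fun k => (p : ZMod (p^m)) * ((y.1 k).val : ZMod (p^m)), ?_, ?_, ?_⟩) ⟨?_, ?_⟩)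
    · -- not primitive
      rw [primitive_iff hp hm]
      push_neg
      intro k
      rw [isUnit_zmod_iff hp hm, not_not, hmulcast, ZMod.val_natCast]
      exact (Nat.dvd_mod_iff (dvd_pow_self p (Nat.one_le_iff_ne_zero.mp hm))).mpr (Dvd.intro _ rfl)
    · rw [key3, key1, key4]
      exact y.2.1
    · rw [key3, key2, key4]
      exact y.2.2
    · -- injective
      rintro ⟨y, hy⟩ ⟨y', hy'⟩ hEq
      ext k
      have hk : (p : ZMod (p^m)) * ((y k).val : ZMod (p^m))
          = (p : ZMod (p^m)) * ((y' k).val : ZMod (p^m)) :=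
        congrFun (congrArg Subtype.val hEq) k
      rw [hmulcast, hmulcast, hvalcast, hvalcast] at hk
      have h1 : p * (y k).val < p^m := by
        rw [hpm, mul_comm p ((y k).val)]
        exact (Nat.mul_lt_mul_right hp.pos).mpr (ZMod.val_lt _)
      have h2 : p * (y' k).val < p^m := by
        rw [hpm, mul_comm p ((y' k).val)]
        exact (Nat.mul_lt_mul_right hp.pos).mpr (ZMod.val_lt _)
      have hv := congrArg ZMod.val hk
      rw [ZMod.val_natCast, ZMod.val_natCast, Nat.mod_eq_of_lt h1, Nat.mod_eq_of_lt h2] at hv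
      exact ZMod.val_injective _ (Nat.eq_of_mul_eq_mul_left hp.pos hv)
    · -- surjective
      rintro ⟨w, hw, hw1, hw2⟩
      have hdvd : ∀ k, p ∣ (w k).val := by
        rw [primitive_iff hp hm] at hw
        push_neg at hw
        intro k
        have := hw k
        rwa [isUnit_zmod_iff hp hm, not_not] at this
      set y : Fin n → ZMod (p^(m-1)) := fun k => (((w k).val / p : ℕ) : ZMod (p^(m-1))) with hydef
      have hlift : ∀ k, (p : ZMod (p^m)) * ((y k).val : ZMod (p^m)) = w k := by
        intro k
        have hlt : (w k).val / p < p^(m-1) := by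
          rw [Nat.div_lt_iff_lt_mul hp.pos, ← hpm]
          exact ZMod.val_lt _
        have hyval : (y k).val = (w k).val / p := by
          rw [hydef]
          simp only
          rw [ZMod.val_natCast, Nat.mod_eq_of_lt hlt]
        rw [hmulcast, hvalcast, hyval, Nat.mul_div_cancel' (hdvd k), ZMod.natCast_zmod_val]
      refine ⟨⟨y, ?_, ?_⟩, ?_⟩
      · have h0 : ∑ k, u k * ((p : ZMod (p^m)) * ((y k).val : ZMod (p^m))) = 0 := by
          calc ∑ k, u k * ((p : ZMod (p^m)) * ((y k).val : ZMod (p^m)))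
              = ∑ k, u k * w k := Finset.sum_congr rfl fun k _ => by rw [hlift k]
            _ = 0 := hw1
        rw [key3, key1, key4] at h0
        exact h0
      · have h0 : p^a ∣ (∑ k, z k * ((p : ZMod (p^m)) * ((y k).val : ZMod (p^m)))).val := by
          have : ∑ k, z k * ((p : ZMod (p^m)) * ((y k).val : ZMod (p^m)))
              = ∑ k, z k * w k := Finset.sum_congr rfl fun k _ => by rw [hlift k]
          rw [this]
          exact hw2
        rw [key3, key2, key4] at h0
        exact h0
      · exact Subtype.ext (funext hlift)
  rw [hbij]
  -- split
  rw [← Nat.card_sum]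
  refine Nat.card_congr ?_
  calc {w : Fin n → ZMod (p^m) //
        Primitive w ∧ (∑ k, u k * w k = 0) ∧ p^a ∣ (∑ k, z k * w k).val}
      ⊕ {w : Fin n → ZMod (p^m) //
        (¬ Primitive w) ∧ (∑ k, u k * w k = 0) ∧ p^a ∣ (∑ k, z k * w k).val}
      ≃ {w : {w : Fin n → ZMod (p^m) // (∑ k, u k * w k = 0) ∧ p^a ∣ (∑ k, z k * w k).val} //
          Primitive w.1}
        ⊕ {w : {w : Fin n → ZMod (p^m) // (∑ k, u k * w k = 0) ∧ p^a ∣ (∑ k, z k * w k).val} //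
          ¬ Primitive w.1} := by
        refine Equiv.sumCongr ?_ ?_
        · exact ((Equiv.subtypeSubtypeEquivSubtypeInter _ _).trans
            (Equiv.subtypeEquivRight fun w => and_comm)).symm
        · exact ((Equiv.subtypeSubtypeEquivSubtypeInter _ _).trans
            (Equiv.subtypeEquivRight fun w => and_comm)).symm
    _ ≃ {w : Fin n → ZMod (p^m) // (∑ k, u k * w k = 0) ∧ p^a ∣ (∑ k, z k * w k).val} :=
        Equiv.sumCompl _


theorem stmt12 (p e n : ℕ) (hp : p.Prime) (he : 2 ≤ e) (hn : 2 ≤ n)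
    (u v : Fin n → ZMod (p^e)) (hu : Primitive u) (hv : Primitive v)
    (hu' : Primitive (red p e u)) (hv' : Primitive (red p e v))
    (hne : ¬ assoc (red p e u) (red p e v)) :
    Bmat (p^e) n (Quotient.mk (projSetoid (p^e) n) ⟨u, hu⟩)
        (Quotient.mk (projSetoid (p^e) n) ⟨v, hv⟩)
      = (p : ℚ)^((n : ℤ) - 3) *
        Bmat (p^(e-1)) n (Quotient.mk (projSetoid (p^(e-1)) n) ⟨red p e u, hu'⟩)
          (Quotient.mk (projSetoid (p^(e-1)) n) ⟨red p e v, hv'⟩) := by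
  haveI hF : Fact p.Prime := ⟨hp⟩
  haveI : NeZero (p^e) := ⟨pow_ne_zero _ hp.ne_zero⟩
  haveI : NeZero (p^(e-1)) := ⟨pow_ne_zero _ hp.ne_zero⟩
  have hq0 : (p:ℚ) ≠ 0 := Nat.cast_ne_zero.mpr hp.ne_zero
  obtain ⟨i, hui⟩ := (primitive_iff hp (by omega) u).mp hu
  obtain ⟨lam, hlamdef⟩ : ∃ lam : ZMod (p^e), lam = (↑hui.unit⁻¹ : ZMod (p^e)) * v i := ⟨_, rfl⟩
  obtain ⟨d, hddef⟩ : ∃ d : Fin n → ZMod (p^e), d = fun j => v j - lam * u j := ⟨_, rfl⟩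
  have hdj : ∀ j, d j = v j - lam * u j := fun j => by rw [hddef]
  have hinv : (↑hui.unit⁻¹ : ZMod (p^e)) * u i = 1 := hui.val_inv_mul
  have hdi : d i = 0 := by
    rw [hdj i, hlamdef]
    linear_combination (-(v i)) * hinv
  set RH := ZMod.castHom (pow_dvd_pow p (Nat.sub_le e 1)) (ZMod (p^(e-1))) with hRH
  have hRval : ∀ x : ZMod (p^e), RH x = ((x.val : ℕ) : ZMod (p^(e-1))) := fun x => by
    rw [ZMod.castHom_apply, ← ZMod.natCast_val]
  have hredapp : ∀ (c : Fin n → ZMod (p^e)) (j : Fin n), red p e c j = RH (c j) :=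
    fun c j => rfl
  -- nondegeneracy mod p^(e-1)
  have hne' : ∃ j, ¬ (p^(e-1) ∣ (d j).val) := by
    by_contra hcon
    push_neg at hcon
    apply hne
    have hveq : ∀ j, red p e v j = RH lam * red p e u j := by
      intro j
      have h0 : RH (d j) = 0 := by
        rw [hRval, ZMod.natCast_eq_zero_iff]
        exact hcon j
      have h1 := congrArg RH (hdj j)
      rw [h0, map_sub, map_mul] at h1
      have h2 := sub_eq_zero.mp h1.symm
      rw [hredapp v, hredapp u]
      exact h2
    obtain ⟨k0, hk0⟩ := (primitive_iff hp (by omega : 1 ≤ e - 1) (red p e v)).mp hv'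
    rw [hveq k0] at hk0
    have hRLu : IsUnit (RH lam) := isUnit_of_mul_isUnit_left hk0
    exact ⟨hRLu.unit, funext fun j => by rw [hRLu.unit_spec]; exact hveq j⟩
  -- the minimal valuation
  have hnonempty : (Finset.univ : Finset (Fin n)).Nonempty := ⟨i, Finset.mem_univ i⟩
  obtain ⟨nu, hnudef⟩ : ∃ nu, nu = Finset.univ.inf' hnonempty (fun j => nuVal p e (d j)) :=
    ⟨_, rfl⟩
  have hnu_le : ∀ j, nu ≤ nuVal p e (d j) := fun j => by
    rw [hnudef]; exact Finset.inf'_le _ (Finset.mem_univ j)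
  have hdvdnu : ∀ j, p^nu ∣ (d j).val := by
    intro j
    rcases eq_or_ne (d j) 0 with h|h
    · rw [h, ZMod.val_zero]; exact dvd_zero _
    · have hle : nu ≤ padicValNat p (d j).val := by
        have := hnu_le j
        rwa [nuVal, if_neg h] at this
      exact (pow_dvd_pow p hle).trans pow_padicValNat_dvd
  obtain ⟨j1, hj1⟩ := hne'
  have hdj1ne : d j1 ≠ 0 := by
    intro h
    rw [h, ZMod.val_zero] at hj1
    exact hj1 (dvd_zero _)
  have hnu2 : nu ≤ e - 2 := by
    have hb : padicValNat p (d j1).val ≤ e - 2 := by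
      by_contra hcb
      push_neg at hcb
      exact hj1 ((pow_dvd_pow p (by omega : e - 1 ≤ padicValNat p (d j1).val)).trans
        pow_padicValNat_dvd)
    have := hnu_le j1
    rw [nuVal, if_neg hdj1ne] at this
    omega
  obtain ⟨j0, _, hj0'⟩ := Finset.exists_mem_eq_inf' hnonempty (fun j => nuVal p e (d j))
  have hj0 : nu = nuVal p e (d j0) := hnudef.trans hj0'
  have hdj0ne : d j0 ≠ 0 := by
    intro h
    rw [h, nuVal, if_pos rfl] at hj0
    omega
  have hpad0 : nu = padicValNat p (d j0).val := by rwa [nuVal, if_neg hdj0ne] at hj0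
  have hvalj0 : (d j0).val ≠ 0 := by
    intro h
    apply hdj0ne
    rw [← ZMod.natCast_zmod_val (d j0), h, Nat.cast_zero]
  -- construct z
  obtain ⟨z, hzdef⟩ : ∃ z : Fin n → ZMod (p^e),
      z = fun j => (((d j).val / p^nu : ℕ) : ZMod (p^e)) := ⟨_, rfl⟩
  have hzj : ∀ j, z j = (((d j).val / p^nu : ℕ) : ZMod (p^e)) := fun j => by rw [hzdef]
  have hz : ∀ j, (p : ZMod (p^e))^nu * z j = v j - lam * u j := by
    intro j
    rw [hzj j, ← hdj j]
    calc (p : ZMod (p^e))^nu * (((d j).val / p^nu : ℕ) : ZMod (p^e))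
        = ((p^nu * ((d j).val / p^nu) : ℕ) : ZMod (p^e)) := by push_cast; ring
      _ = (((d j).val : ℕ) : ZMod (p^e)) := by rw [Nat.mul_div_cancel' (hdvdnu j)]
      _ = d j := ZMod.natCast_zmod_val _
  have hzi : z i = 0 := by
    rw [hzj i, hdi, ZMod.val_zero, Nat.zero_div, Nat.cast_zero]
  have hzj0 : IsUnit (z j0) := by
    have hnd : ¬ p ∣ (d j0).val / p^nu := by
      intro hdv
      have h2 : p^(nu+1) ∣ (d j0).val := by
        rw [pow_succ]
        exact (Nat.dvd_div_iff_mul_dvd (hdvdnu j0)).mp hdv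
      have h3 := pow_succ_padicValNat_not_dvd (p := p) hvalj0
      rw [← hpad0] at h3
      exact h3 h2
    rw [hzj j0, ZMod.isUnit_iff_coprime]
    exact Nat.Coprime.pow_right _
      ((Nat.coprime_comm).mp ((Nat.Prime.coprime_iff_not_dvd hp).mpr hnd))
  haveI : Nontrivial (ZMod (p^e)) := by
    haveI : Fact (1 < p^e) := ⟨Nat.one_lt_pow (by omega) hp.one_lt⟩
    infer_instance
  have hij0 : i ≠ j0 := by
    rintro rfl
    rw [hzi] at hzj0
    exact not_isUnit_zero hzj0
  have hdet : IsUnit (u i * z j0 - u j0 * z i) := by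
    rw [hzi, mul_zero, sub_zero]
    exact hui.mul hzj0
  -- reduced data
  have hz' : ∀ j, (p : ZMod (p^(e-1)))^nu * red p e z j = red p e v j - RH lam * red p e u j := by
    intro j
    have h0 := congrArg RH (hz j)
    rw [map_mul, map_pow, map_natCast, map_sub, map_mul] at h0
    exact h0
  have hdet' : IsUnit (red p e u i * red p e z j0 - red p e u j0 * red p e z i) := by
    have h0 := hdet.map RH
    rwa [map_sub, map_mul, map_mul] at h0
  set RH2 := ZMod.castHom (pow_dvd_pow p (Nat.sub_le (e-1) 1)) (ZMod (p^(e-1-1))) with hRH2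
  have hdet'' : IsUnit ((fun k => RH2 (red p e u k)) i * (fun k => RH2 (red p e z k)) j0
      - (fun k => RH2 (red p e u k)) j0 * (fun k => RH2 (red p e z k)) i) := by
    have h0 := hdet'.map RH2
    rwa [map_sub, map_mul, map_mul] at h0
  have hx1 : 1 ≤ e := by omega
  have hx2 : 1 ≤ e - nu := by omega
  have hx3 : e - nu ≤ e := by omega
  have hx4 : 1 ≤ e - 1 := by omega
  have hx5 : 1 ≤ e - 1 - nu := by omega
  have hx6 : e - 1 - nu ≤ e - 1 := by omega
  have hx7 : e - 1 - nu - 1 ≤ e - 1 - 1 := by omega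
  have hx8 : nu ≤ e := by omega
  have hx9 : nu ≤ e - 1 := by omega
  have hx10 : e - nu - 1 = e - 1 - nu := by omega
  obtain ⟨K, hK⟩ : ∃ K, e = nu + K + 2 := ⟨e - nu - 2, by omega⟩
  have hy1 : e - nu = K + 2 := by omega
  have hy2 : e - 1 - nu - 1 = K := by omega
  have hy3 : e - 1 - nu = K + 1 := by omega
  have hy4 : e - 1 - 1 = nu + K := by omega
  have hy5 : e - 1 = nu + K + 1 := by omega
  -- counting lemmas instantiated
  have hdecompE := card_prim_decomp (n := n) hp hx1 hx2 hx3
      u z (red p e u) (red p e z) (fun k => rfl) (fun k => rfl)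
  have hdecompE1 := card_prim_decomp (n := n) hp hx4 hx5 hx6
      (red p e u) (red p e z)
      (fun k => RH2 (red p e u k)) (fun k => RH2 (red p e z k)) (fun k => rfl) (fun k => rfl)
  have hkerE := card_ker (n := n) hp hx3 u z hdet
  have hkerE1 := card_ker (n := n) hp hx6
      (red p e u) (red p e z) hdet'
  have hkerE2 := card_ker (n := n) hp hx7
      (fun k => RH2 (red p e u k)) (fun k => RH2 (red p e z k)) hdet''
  rw [hx10] at hdecompE
  -- condition bridges
  have hbridgeE : Nat.card {w : Fin n → ZMod (p^e) //
        Primitive w ∧ (∑ k, u k * w k = 0) ∧ (∑ k, v k * w k = 0)}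
      = Nat.card {w : Fin n → ZMod (p^e) //
        Primitive w ∧ (∑ k, u k * w k = 0) ∧ p^(e-nu) ∣ (∑ k, z k * w k).val} :=
    Nat.card_congr (Equiv.subtypeEquivRight fun w =>
      and_congr_right fun _ => and_congr_right fun h1 =>
        cond_equiv hp hx8 u v z lam hz w h1)
  have hbridgeE1 : Nat.card {w : Fin n → ZMod (p^(e-1)) //
        Primitive w ∧ (∑ k, red p e u k * w k = 0) ∧ (∑ k, red p e v k * w k = 0)}
      = Nat.card {w : Fin n → ZMod (p^(e-1)) //
        Primitive w ∧ (∑ k, red p e u k * w k = 0) ∧ p^(e-1-nu) ∣ (∑ k, red p e z k * w k).val} :=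
    Nat.card_congr (Equiv.subtypeEquivRight fun w =>
      and_congr_right fun _ => and_congr_right fun h1 =>
        cond_equiv hp hx9 (red p e u) (red p e v) (red p e z)
          (RH lam) hz' w h1)
  have horthE := card_orth_mul (n := n) hp hx1 u v hu hv
  have horthE1 := card_orth_mul (n := n) hp hx4
      (red p e u) (red p e v) hu' hv'
  -- name all the cardinalities
  simp only [Bmat]
  set cT : ℕ := Nat.card {w : Fin n → ZMod (p^e) //
      (∑ k, u k * w k = 0) ∧ p^(e-nu) ∣ (∑ k, z k * w k).val} with hcT
  set cM : ℕ := Nat.card {y : Fin n → ZMod (p^(e-1)) //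
      (∑ k, red p e u k * y k = 0) ∧ p^(e-1-nu) ∣ (∑ k, red p e z k * y k).val} with hcM
  set cL : ℕ := Nat.card {y : Fin n → ZMod (p^(e-1-1)) //
      (∑ k, (fun k => RH2 (red p e u k)) k * y k = 0)
        ∧ p^(e-1-nu-1) ∣ (∑ k, (fun k => RH2 (red p e z k)) k * y k).val} with hcL
  set cP : ℕ := Nat.card {w : Fin n → ZMod (p^e) //
      Primitive w ∧ (∑ k, u k * w k = 0) ∧ p^(e-nu) ∣ (∑ k, z k * w k).val} with hcP
  set cP' : ℕ := Nat.card {w : Fin n → ZMod (p^(e-1)) //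
      Primitive w ∧ (∑ k, red p e u k * w k = 0)
        ∧ p^(e-1-nu) ∣ (∑ k, red p e z k * w k).val} with hcP'
  set bP : ℕ := Nat.card {w : Fin n → ZMod (p^e) //
      Primitive w ∧ (∑ k, u k * w k = 0) ∧ (∑ k, v k * w k = 0)} with hbP
  set bP' : ℕ := Nat.card {w : Fin n → ZMod (p^(e-1)) //
      Primitive w ∧ (∑ k, red p e u k * w k = 0) ∧ (∑ k, red p e v k * w k = 0)} with hbP'
  set B1 : ℕ := Nat.card {W : ProjPt (p^e) n //
      orthoPt (p^e) n (Quotient.mk (projSetoid (p^e) n) ⟨u, hu⟩) W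
      ∧ orthoPt (p^e) n (Quotient.mk (projSetoid (p^e) n) ⟨v, hv⟩) W} with hB1
  set B1' : ℕ := Nat.card {W : ProjPt (p^(e-1)) n //
      orthoPt (p^(e-1)) n (Quotient.mk (projSetoid (p^(e-1)) n) ⟨red p e u, hu'⟩) W
      ∧ orthoPt (p^(e-1)) n (Quotient.mk (projSetoid (p^(e-1)) n) ⟨red p e v, hv'⟩) W} with hB1'
  -- rational versions
  have qd1 : (cP:ℚ) + (cM:ℚ) = (cT:ℚ) := by exact_mod_cast hdecompE
  have qd2 : (cP':ℚ) + (cL:ℚ) = (cM:ℚ) := by exact_mod_cast hdecompE1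
  have qc1 : (cT:ℚ) * ((p:ℚ)^e * (p:ℚ)^(e-nu)) = ((p:ℚ)^e)^n := by exact_mod_cast hkerE
  have qc2 : (cM:ℚ) * ((p:ℚ)^(e-1) * (p:ℚ)^(e-1-nu)) = ((p:ℚ)^(e-1))^n := by
    exact_mod_cast hkerE1
  have qc3 : (cL:ℚ) * ((p:ℚ)^(e-1-1) * (p:ℚ)^(e-1-nu-1)) = ((p:ℚ)^(e-1-1))^n := by
    exact_mod_cast hkerE2
  have q3 : (bP:ℚ) = (cP:ℚ) := by exact_mod_cast hbridgeE
  have q4 : (bP':ℚ) = (cP':ℚ) := by exact_mod_cast hbridgeE1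
  have q1 : (bP:ℚ) = (B1:ℚ) * ((p^e).totient:ℚ) := by exact_mod_cast horthE
  have q2 : (bP':ℚ) = (B1':ℚ) * ((p^(e-1)).totient:ℚ) := by exact_mod_cast horthE1
  rw [hy1, hK] at qc1
  rw [hy3, hy5] at qc2
  rw [hy2, hy4] at qc3
  have key1 : ((p:ℚ)^(nu+K+2))^n = (p:ℚ)^n * ((p:ℚ)^(nu+K+1))^n := by
    rw [← mul_pow]
    congr 1
    ring
  have key2 : ((p:ℚ)^(nu+K+1))^n = (p:ℚ)^n * ((p:ℚ)^(nu+K))^n := by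
    rw [← mul_pow]
    congr 1
    ring
  have hA : (cT:ℚ) * (p:ℚ)^2 = (cM:ℚ) * (p:ℚ)^n := by
    apply mul_right_cancel₀ (show ((p:ℚ)^(nu+K+1) * (p:ℚ)^(K+1)) ≠ 0 from
      mul_ne_zero (pow_ne_zero _ hq0) (pow_ne_zero _ hq0))
    linear_combination qc1 + key1 - (p:ℚ)^n * qc2
  have hB : (cM:ℚ) * (p:ℚ)^2 = (cL:ℚ) * (p:ℚ)^n := by
    apply mul_right_cancel₀ (show ((p:ℚ)^(nu+K) * (p:ℚ)^K) ≠ 0 from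
      mul_ne_zero (pow_ne_zero _ hq0) (pow_ne_zero _ hq0))
    linear_combination qc2 + key2 - (p:ℚ)^n * qc3
  have master : (cP:ℚ) * (p:ℚ)^2 = (cP':ℚ) * (p:ℚ)^n := by
    linear_combination (p:ℚ)^2 * qd1 - (p:ℚ)^n * qd2 + hA - hB
  have htot : ((p^e).totient : ℚ) = (p:ℚ) * ((p^(e-1)).totient : ℚ) := by
    rw [Nat.totient_prime_pow hp (show 0 < e from hx1),
      Nat.totient_prime_pow hp (show 0 < e - 1 from hx4)]
    push_cast
    rw [hy4, hy5]
    ring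
  have hphine : ((p^(e-1)).totient : ℚ) ≠ 0 :=
    Nat.cast_ne_zero.mpr (Nat.totient_pos.mpr (pow_pos hp.pos _)).ne'
  have hfin : (B1:ℚ) * (p:ℚ)^3 = (B1':ℚ) * (p:ℚ)^n := by
    apply mul_right_cancel₀ hphine
    linear_combination master + (p:ℚ)^2 * q3 - (p:ℚ)^2 * q1
      - ((p:ℚ)^2 * (B1:ℚ)) * htot - (p:ℚ)^n * q4 + (p:ℚ)^n * q2
  have hzp : (p:ℚ)^((n:ℤ)-3) = (p:ℚ)^n / (p:ℚ)^3 := by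
    rw [zpow_sub₀ hq0, zpow_natCast]
    norm_cast
  rw [hzp, div_mul_eq_mul_div, eq_div_iff (pow_ne_zero 3 hq0)]
  linear_combination hfin
end
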